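/- arXiv:2109.12175 — 7 statements merged into one kernel-verified Lean document; each statement's English description precedes it below -/
import Mathlib

section
/- Let C ∈ ℝ^{n×n} be symmetric, E ∈ ℝ^{n×p}, G ∈ ℝ^{q×n}, and F̄ ∈ ℝ^{q×q} be symmetric positive semidefinite. Then the inequality C + E F G + Gᵀ Fᵀ Eᵀ ≺ 0 holds for all F ∈ ℝ^{p×q} with Fᵀ F ⪯ F̄ if and only if there exists λ > 0 such that C + λ E Eᵀ + λ⁻¹ Gᵀ F̄ G ≺ 0. -/
open Matrix
namespace SPA

variable {N : ℕ}

noncomputable def qf (M : Matrix (Fin N) (Fin N) ℝ) (x : Fin N → ℝ) : ℝ := x ⬝ᵥ (M *ᵥ x)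

lemma qf_add (M₁ M₂ : Matrix (Fin N) (Fin N) ℝ) (x : Fin N → ℝ) :
    qf (M₁ + M₂) x = qf M₁ x + qf M₂ x := by
  simp [qf, add_mulVec, dotProduct_add]

lemma qf_smul (c : ℝ) (M : Matrix (Fin N) (Fin N) ℝ) (x : Fin N → ℝ) :
    qf (c • M) x = c * qf M x := by
  simp [qf, smul_mulVec, dotProduct_smul]

lemma qf_neg (M : Matrix (Fin N) (Fin N) ℝ) (x : Fin N → ℝ) : qf (-M) x = - qf M x := by
  simp [qf, neg_mulVec, dotProduct_neg]

lemma qf_sub (M₁ M₂ : Matrix (Fin N) (Fin N) ℝ) (x : Fin N → ℝ) :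
    qf (M₁ - M₂) x = qf M₁ x - qf M₂ x := by
  simp [qf, sub_mulVec, dotProduct_sub]

lemma qf_one (x : Fin N → ℝ) : qf 1 x = x ⬝ᵥ x := by simp [qf]

lemma qf_smul_vec (M : Matrix (Fin N) (Fin N) ℝ) (c : ℝ) (x : Fin N → ℝ) :
    qf M (c • x) = c ^ 2 * qf M x := by
  simp [qf, mulVec_smul, smul_dotProduct, dotProduct_smul, smul_eq_mul]; ring

lemma qf_neg_vec (M : Matrix (Fin N) (Fin N) ℝ) (x : Fin N → ℝ) : qf M (-x) = qf M x := by
  simp [qf, mulVec_neg, dotProduct_neg, neg_dotProduct]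

lemma qf_continuous (M : Matrix (Fin N) (Fin N) ℝ) : Continuous (qf M) :=
  (continuous_id).dotProduct ((continuous_const).matrix_mulVec continuous_id)

lemma qf_transpose (M : Matrix (Fin N) (Fin N) ℝ) (x : Fin N → ℝ) :
    qf Mᵀ x = qf M x := by
  rw [qf, qf, mulVec_transpose, dotProduct_mulVec, dotProduct_comm]


variable {N : ℕ}

lemma bilin_comm {M : Matrix (Fin N) (Fin N) ℝ} (hsym : Mᵀ = M) (x y : Fin N → ℝ) :
    x ⬝ᵥ (M *ᵥ y) = y ⬝ᵥ (M *ᵥ x) := by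
  rw [dotProduct_mulVec, ← mulVec_transpose, hsym, dotProduct_comm]

lemma quad_coeff {a b c : ℝ} (ha : 0 ≤ a) (h : ∀ t : ℝ, 0 ≤ a * t ^ 2 + 2 * b * t + c) :
    b ^ 2 ≤ a * c := by
  rcases eq_or_lt_of_le ha with ha0 | hapos
  · have hb : b = 0 := by
      by_contra hb
      have := h (-(c + 1) / (2 * b))
      rw [← ha0] at this
      field_simp at this
      rw [le_div_iff₀ (lt_of_le_of_ne (sq_nonneg b) (Ne.symm (pow_ne_zero 2 hb)))] at this
      nlinarith [h 0, lt_of_le_of_ne (sq_nonneg b) (Ne.symm (pow_ne_zero 2 hb))]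
    have := h 0
    nlinarith
  · have := h (-b / a)
    have h2 : a * (-b / a) ^ 2 + 2 * b * (-b / a) + c = c - b ^ 2 / a := by
      field_simp; ring
    rw [h2] at this
    have := (div_le_iff₀ hapos).mp (by linarith : b ^ 2 / a ≤ c)
    linarith [this]

lemma qf_expand {M : Matrix (Fin N) (Fin N) ℝ} (hsym : Mᵀ = M) (x y : Fin N → ℝ) (t : ℝ) :
    qf M (x + t • y) = qf M x + 2 * t * (y ⬝ᵥ (M *ᵥ x)) + t ^ 2 * qf M y := by
  have hb := bilin_comm hsym x y
  simp only [qf, mulVec_add, mulVec_smul, dotProduct_add, add_dotProduct, dotProduct_smul,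
    smul_dotProduct, smul_eq_mul]
  rw [hb]; ring

lemma qf_kernel {M : Matrix (Fin N) (Fin N) ℝ} (hsym : Mᵀ = M)
    (hpsd : ∀ y, 0 ≤ qf M y) {x : Fin N → ℝ} (hx : qf M x = 0) : M *ᵥ x = 0 := by
  set w := M *ᵥ x with hw
  have key : (w ⬝ᵥ w) ^ 2 ≤ qf M w * 0 :=
    quad_coeff (hpsd w) (fun t => by
      have := hpsd (x + t • w)
      rw [qf_expand hsym x w t, hx] at this
      linarith)
  have : w ⬝ᵥ w = 0 := by nlinarith [sq_nonneg (w ⬝ᵥ w)]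
  exact dotProduct_self_eq_zero.mp this

variable {N : ℕ}

def Sp (N : ℕ) : Set (Fin N → ℝ) := {x | x ⬝ᵥ x = 1}

lemma dot_self_nonneg (x : Fin N → ℝ) : 0 ≤ x ⬝ᵥ x :=
  Finset.sum_nonneg fun i _ => mul_self_nonneg _

lemma dot_self_pos {x : Fin N → ℝ} (hx : x ≠ 0) : 0 < x ⬝ᵥ x :=
  lt_of_le_of_ne (dot_self_nonneg x) (fun h => hx (dotProduct_self_eq_zero.mp h.symm))

lemma isCompact_Sp : IsCompact (Sp N) := by
  apply Metric.isCompact_of_isClosed_isBounded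
  · have : Continuous fun x : Fin N → ℝ => x ⬝ᵥ x :=
      continuous_id.dotProduct continuous_id
    exact isClosed_eq this continuous_const
  · rw [Metric.isBounded_iff_subset_closedBall 0]
    refine ⟨1, fun x hx => ?_⟩
    have h1 : x ⬝ᵥ x = 1 := hx
    simp only [Metric.mem_closedBall, dist_zero_right]
    rw [pi_norm_le_iff_of_nonneg (by norm_num : (0:ℝ) ≤ 1)]
    intro i
    have : x i ^ 2 ≤ 1 := by
      have h2 : x i * x i ≤ x ⬝ᵥ x := Finset.single_le_sum (f := fun j => x j * x j)
        (fun j _ => mul_self_nonneg _) (Finset.mem_univ i)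
      rw [h1] at h2
      nlinarith
    rw [Real.norm_eq_abs, abs_le]
    constructor <;> nlinarith

lemma Sp_ne_zero {x : Fin N → ℝ} (hx : x ∈ Sp N) : x ≠ 0 := by
  intro h; rw [h] at hx; simp [Sp] at hx

lemma normalize_mem_Sp {x : Fin N → ℝ} (hx : x ≠ 0) :
    ((Real.sqrt (x ⬝ᵥ x))⁻¹ • x) ∈ Sp N ∧ (0 : ℝ) < Real.sqrt (x ⬝ᵥ x) := by
  have h := dot_self_pos hx
  have hs : 0 < Real.sqrt (x ⬝ᵥ x) := Real.sqrt_pos.mpr h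
  refine ⟨?_, hs⟩
  show ((Real.sqrt (x ⬝ᵥ x))⁻¹ • x) ⬝ᵥ ((Real.sqrt (x ⬝ᵥ x))⁻¹ • x) = 1
  rw [smul_dotProduct, dotProduct_smul, smul_eq_mul, smul_eq_mul]
  rw [← mul_assoc, ← Real.sqrt_mul_self h.le]
  field_simp
  exact (Real.sq_sqrt (Real.sqrt_nonneg _)).symm


lemma aux {ι : Type*} (S : Set ι) (p q a : ι → ℝ)
    (hq0 : ∀ x ∈ S, 0 ≤ q x)
    (Rp Rq : ℝ) (hRp0 : 0 ≤ Rp) (hRq0 : 0 ≤ Rq)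
    (hRp : ∀ x ∈ S, p x ≤ Rp) (hRq : ∀ x ∈ S, q x ≤ Rq)
    (l₀ : ℝ) (hl₀ : 0 < l₀) (m δ : ℝ) (hδ : 0 < δ)
    (hm : ∀ x ∈ S, l₀ * p x + l₀⁻¹ * q x - a x ≤ m)
    (hsplit : ∀ x ∈ S, l₀ * p x + l₀⁻¹ * q x - a x ≤ m - δ ∨ l₀ * p x - l₀⁻¹ * q x ≤ -δ) :
    ∃ l, 0 < l ∧ ∀ x ∈ S, l * p x + l⁻¹ * q x - a x < m := by
  set τ := min (δ * l₀ ^ 2 / (2 * Rq + 1)) (δ / (2 * (Rp + 1))) with hτdef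
  have hτ1 : τ ≤ δ * l₀ ^ 2 / (2 * Rq + 1) := min_le_left _ _
  have hτ2 : τ ≤ δ / (2 * (Rp + 1)) := min_le_right _ _
  have hτpos : 0 < τ := by
    apply lt_min <;> positivity
  clear_value τ
  clear hτdef
  set l := l₀ + τ with hldef
  have hlpos : 0 < l := by positivity
  have hll₀ : l₀ < l := by simp [hldef]; linarith
  have hτl : τ = l - l₀ := by rw [hldef]; ring
  clear_value l
  clear hldef
  refine ⟨l, hlpos, fun x hxS => ?_⟩
  have hQ0 := hq0 x hxS
  have hP := hRp x hxS
  have hQ := hRq x hxS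
  have E1 : l * p x + l⁻¹ * q x = (l₀ * p x + l₀⁻¹ * q x) + τ * p x - τ * q x / (l * l₀) := by
    rw [hτl]
    field_simp
    ring
  rcases hsplit x hxS with hψ | hd
  · -- far from max case
    have h1 : τ * p x ≤ τ * Rp := by nlinarith
    have h2 : τ * Rp < δ := by
      rw [le_div_iff₀ (by positivity : (0:ℝ) < 2 * (Rp + 1))] at hτ2
      nlinarith
    have h3 : 0 ≤ τ * q x / (l * l₀) := by positivity
    rw [E1]
    linarith
  · -- negative derivative case
    have hmx := hm x hxS
    -- p x ≤ q x / l₀^2 - δ/l₀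
    have h4 : p x ≤ q x / l₀ ^ 2 - δ / l₀ := by
      have h5 : l₀ * p x ≤ q x / l₀ - δ := by rw [div_eq_inv_mul]; linarith
      have h5b : (l₀ * p x) / l₀ ≤ (q x / l₀ - δ) / l₀ := by gcongr
      have h5c : (l₀ * p x) / l₀ = p x := by field_simp
      have h5d : (q x / l₀ - δ) / l₀ = q x / l₀ ^ 2 - δ / l₀ := by field_simp
      rw [h5c, h5d] at h5b
      exact h5b
    -- q x / (l * l₀) ≥ q x / l₀^2 - δ/(2*l₀)
    have h6 : q x / l₀ ^ 2 - q x / (l * l₀) ≤ δ / (2 * l₀) := by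
      have heq : q x / l₀ ^ 2 - q x / (l * l₀) = q x * τ / (l * l₀ ^ 2) := by
        rw [hτl]
        field_simp
      rw [heq]
      have h7 : q x * τ / (l * l₀ ^ 2) ≤ Rq * τ / (l₀ ^ 3) := by
        apply div_le_div₀ (by positivity) (by nlinarith) (by positivity) (by nlinarith)
      have h8 : Rq * τ / l₀ ^ 3 ≤ δ / (2 * l₀) := by
        rw [div_le_div_iff₀ (by positivity) (by positivity)]
        rw [le_div_iff₀ (by positivity : (0:ℝ) < 2 * Rq + 1)] at hτ1
        nlinarith [mul_le_mul_of_nonneg_right hτ1 hl₀.le, mul_pos hτpos hl₀]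
      linarith
    have h9 : p x - q x / (l * l₀) ≤ -(δ / (2 * l₀)) := by
      have hhalf : δ / l₀ = 2 * (δ / (2 * l₀)) := by field_simp
      linarith
    have h10 : τ * p x - τ * q x / (l * l₀) ≤ τ * (-(δ / (2 * l₀))) := by
      have := mul_le_mul_of_nonneg_left h9 hτpos.le
      calc τ * p x - τ * q x / (l * l₀) = τ * (p x - q x / (l * l₀)) := by ring
        _ ≤ τ * (-(δ / (2 * l₀))) := this
    have h11 : τ * (-(δ / (2 * l₀))) < 0 := by
      have : 0 < δ / (2 * l₀) := by positivity
      nlinarith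
    rw [E1]
    linarith


-- Main analytic core lemma
set_option maxHeartbeats 2000000 in
lemma core {N : ℕ} (P Q A : Matrix (Fin N) (Fin N) ℝ)
    (hPs : Pᵀ = P) (hQs : Qᵀ = Q) (hAs : Aᵀ = A)
    (hP : ∀ x, 0 ≤ qf P x) (hQ : ∀ x, 0 ≤ qf Q x)
    (hA : ∀ x : Fin N → ℝ, x ≠ 0 → 0 < qf A x)
    (hyp : ∀ x : Fin N → ℝ, x ≠ 0 → 4 * (qf P x * qf Q x) < (qf A x) ^ 2) :
    ∃ lam : ℝ, 0 < lam ∧ ∀ x : Fin N → ℝ, x ≠ 0 →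
      lam * qf P x + lam⁻¹ * qf Q x < qf A x := by
  by_cases htriv : ∀ x : Fin N → ℝ, x = 0
  · exact ⟨1, one_pos, fun x hx => absurd (htriv x) hx⟩
  push_neg at htriv
  obtain ⟨x₀, hx₀⟩ := htriv
  have hSpne : (Sp N).Nonempty := ⟨_, (normalize_mem_Sp hx₀).1⟩
  set p : (Fin N → ℝ) → ℝ := qf P with hpdef
  set q : (Fin N → ℝ) → ℝ := qf Q with hqdef
  set a : (Fin N → ℝ) → ℝ := qf A with hadef
  have hpscale : ∀ (c : ℝ) (x : Fin N → ℝ), p (c • x) = c ^ 2 * p x := fun c x => qf_smul_vec P c x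
  have hqscale : ∀ (c : ℝ) (x : Fin N → ℝ), q (c • x) = c ^ 2 * q x := fun c x => qf_smul_vec Q c x
  have hascale : ∀ (c : ℝ) (x : Fin N → ℝ), a (c • x) = c ^ 2 * a x := fun c x => qf_smul_vec A c x
  have hpneg : ∀ x : Fin N → ℝ, p (-x) = p x := fun x => qf_neg_vec P x
  have hqneg : ∀ x : Fin N → ℝ, q (-x) = q x := fun x => qf_neg_vec Q x
  have hcontp : Continuous p := qf_continuous P
  have hcontq : Continuous q := qf_continuous Q
  have hconta : Continuous a := qf_continuous A
  suffices hS : ∃ lam : ℝ, 0 < lam ∧ ∀ x ∈ Sp N, lam * p x + lam⁻¹ * q x < a x by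
    obtain ⟨lam, hlam, hlt⟩ := hS
    refine ⟨lam, hlam, fun x hx => ?_⟩
    obtain ⟨huSp, hr⟩ := normalize_mem_Sp hx
    set r : ℝ := Real.sqrt (x ⬝ᵥ x) with hrdef
    have hu := hlt _ huSp
    have hpu : p (r⁻¹ • x) = (r⁻¹) ^ 2 * p x := hpscale r⁻¹ x
    have hqu : q (r⁻¹ • x) = (r⁻¹) ^ 2 * q x := hqscale r⁻¹ x
    have hau : a (r⁻¹ • x) = (r⁻¹) ^ 2 * a x := hascale r⁻¹ x
    rw [hpu, hqu, hau] at hu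
    have hr2 : (0:ℝ) < r ^ 2 := by positivity
    have := (mul_lt_mul_iff_right₀ hr2).mpr hu
    have hrr : r ^ 2 * ((r⁻¹) ^ 2) = 1 := by
      field_simp
    calc lam * p x + lam⁻¹ * q x
        = r ^ 2 * (lam * ((r⁻¹) ^ 2 * p x) + lam⁻¹ * ((r⁻¹) ^ 2 * q x)) := by
          field_simp
      _ < r ^ 2 * ((r⁻¹) ^ 2 * a x) := this
      _ = a x := by field_simp
  clear_value p q a
  -- maximizers of p, q, a and minimizer of a on the sphere
  obtain ⟨xP, hxPSp, hxPmax⟩ := isCompact_Sp.exists_isMaxOn hSpne hcontp.continuousOn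
  obtain ⟨xQ, hxQSp, hxQmax⟩ := isCompact_Sp.exists_isMaxOn hSpne hcontq.continuousOn
  obtain ⟨xA, hxASp, hxAmax⟩ := isCompact_Sp.exists_isMaxOn hSpne hconta.continuousOn
  obtain ⟨xa, hxaSp, hxamin⟩ := isCompact_Sp.exists_isMinOn hSpne hconta.continuousOn
  set Rp : ℝ := p xP with hRpdef
  set Rq : ℝ := q xQ with hRqdef
  set aMax : ℝ := a xA with haMaxdef
  set aMin : ℝ := a xa with haMindef
  have hRpbd : ∀ x ∈ Sp N, p x ≤ Rp := fun x hx => hxPmax hx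
  have hRqbd : ∀ x ∈ Sp N, q x ≤ Rq := fun x hx => hxQmax hx
  have haMaxbd : ∀ x ∈ Sp N, a x ≤ aMax := fun x hx => hxAmax hx
  have haMinbd : ∀ x ∈ Sp N, aMin ≤ a x := fun x hx => hxamin hx
  have hRp0 : 0 ≤ Rp := hP xP
  have hRq0 : 0 ≤ Rq := hQ xQ
  have haMin0 : 0 < aMin := hA xa (Sp_ne_zero hxaSp)
  have haMax0 : 0 < aMax := lt_of_lt_of_le haMin0 (haMinbd xA hxASp)
  clear_value Rp Rq aMax aMin
  -- trivial case : p vanishes on the sphere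
  by_cases hRpz : Rp = 0
  · refine ⟨Rq / aMin + 1, by positivity, fun x hx => ?_⟩
    have hpx : p x = 0 := le_antisymm (hRpz ▸ hRpbd x hx) (hP x)
    have hqx := hRqbd x hx
    have hax := haMinbd x hx
    set lam : ℝ := Rq / aMin + 1 with hlamdef
    have hlam1 : 0 < lam := by positivity
    have hkey : lam⁻¹ * Rq < aMin := by
      rw [inv_mul_lt_iff₀ hlam1, hlamdef]
      have : (Rq / aMin + 1) * aMin = Rq + aMin := by field_simp
      nlinarith
    have : lam⁻¹ * q x ≤ lam⁻¹ * Rq := by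
      apply mul_le_mul_of_nonneg_left hqx (by positivity)
    rw [hpx]
    nlinarith
  have hRppos : 0 < Rp := lt_of_le_of_ne hRp0 (Ne.symm hRpz)
  -- trivial case : q vanishes on the sphere
  by_cases hRqz : Rq = 0
  · refine ⟨aMin / (Rp + 1), by positivity, fun x hx => ?_⟩
    have hqx : q x = 0 := le_antisymm (hRqz ▸ hRqbd x hx) (hQ x)
    have hpx := hRpbd x hx
    have hax := haMinbd x hx
    have hp0 := hP x
    set lam : ℝ := aMin / (Rp + 1) with hlamdef
    have hlam1 : 0 < lam := by positivity
    have hkey : lam * Rp < aMin := by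
      rw [hlamdef, div_mul_eq_mul_div, div_lt_iff₀ (by positivity : (0:ℝ) < Rp + 1)]
      nlinarith
    have : lam * p x ≤ lam * Rp := mul_le_mul_of_nonneg_left hpx hlam1.le
    rw [hqx]
    nlinarith
  have hRqpos : 0 < Rq := lt_of_le_of_ne hRq0 (Ne.symm hRqz)
  -- main case
  by_contra hcon
  push_neg at hcon
  -- the sup function g
  set φ : ℝ → (Fin N → ℝ) → ℝ := fun l x => l * p x + l⁻¹ * q x - a x with hφdef
  have hφcont : ∀ l : ℝ, Continuous (φ l) := by
    rw [hφdef]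
    intro l
    apply Continuous.sub
    · exact ((continuous_const.mul hcontp).add (continuous_const.mul hcontq))
    · exact hconta
  clear_value φ
  set g : ℝ → ℝ := fun l => sSup ((φ l) '' Sp N) with hgdef
  have key : ∀ l : ℝ, ∃ z ∈ Sp N, (∀ y ∈ Sp N, φ l y ≤ φ l z) ∧ g l = φ l z := by
    intro l
    obtain ⟨z, hzSp, hzmax⟩ := isCompact_Sp.exists_isMaxOn hSpne (hφcont l).continuousOn
    refine ⟨z, hzSp, fun y hy => hzmax hy, ?_⟩
    apply IsGreatest.csSup_eq
    exact ⟨⟨z, hzSp, rfl⟩, fun w ⟨y, hy, hwy⟩ => hwy ▸ hzmax hy⟩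
  have hgub : ∀ l : ℝ, ∀ x ∈ Sp N, φ l x ≤ g l := by
    intro l x hx
    obtain ⟨z, hzSp, hzmax, hgz⟩ := key l
    rw [hgz]; exact hzmax x hx
  clear_value g
  -- negation gives lower bound 0 on g for positive l
  have hgpos : ∀ l : ℝ, 0 < l → 0 ≤ g l := by
    intro l hl
    obtain ⟨x, hxSp, hxle⟩ := hcon l hl
    have : 0 ≤ φ l x := by simp only [hφdef]; linarith
    linarith [hgub l x hxSp]
  -- choose the window [α, β]
  set G₁ : ℝ := g 1 with hG₁def
  have hG₁Rp : Rp ≤ G₁ + aMax := by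
    have := hgub 1 xP hxPSp
    have hφxP : φ 1 xP = p xP + q xP - a xP := by simp [hφdef]
    rw [hRpdef]
    nlinarith [hQ xP, haMaxbd xP hxPSp]
  have hG₁Rq : Rq ≤ G₁ + aMax := by
    have := hgub 1 xQ hxQSp
    have hφxQ : φ 1 xQ = p xQ + q xQ - a xQ := by simp [hφdef]
    rw [hRqdef]
    nlinarith [hP xQ, haMaxbd xQ hxQSp]
  have hDpos : 0 < G₁ + aMax + 1 := by nlinarith
  clear_value G₁
  set β : ℝ := (G₁ + aMax + 1) / Rp with hβdef
  set α : ℝ := Rq / (G₁ + aMax + 1) with hαdef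
  have hαpos : 0 < α := by positivity
  have hα1 : α < 1 := by
    rw [hαdef, div_lt_one hDpos]; linarith
  have hβ1 : 1 < β := by
    rw [hβdef, lt_div_iff₀ hRppos]; nlinarith
  have hαβ : α ≤ β := by linarith
  clear_value α β
  -- g exceeds G₁ + 1 outside the window
  have houtβ : ∀ l : ℝ, β < l → G₁ + 1 < g l := by
    intro l hl
    have hl0 : 0 < l := lt_trans (by linarith) hl
    have h1 := hgub l xP hxPSp
    have hφ : φ l xP = l * Rp + l⁻¹ * q xP - a xP := by simp [hφdef, hRpdef]
    have h2 : l * Rp > β * Rp := by nlinarith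
    have h3 : β * Rp = G₁ + aMax + 1 := by
      rw [hβdef, div_mul_cancel₀ _ (ne_of_gt hRppos)]
    have h4 : 0 ≤ l⁻¹ * q xP := by
      have := hQ xP; positivity
    nlinarith [haMaxbd xP hxPSp]
  have houtα : ∀ l : ℝ, 0 < l → l < α → G₁ + 1 < g l := by
    intro l hl0 hl
    have h1 := hgub l xQ hxQSp
    have hφ : φ l xQ = l * p xQ + l⁻¹ * Rq - a xQ := by simp [hφdef, hRqdef]
    have h2 : l⁻¹ * Rq > α⁻¹ * Rq := by
      have : α⁻¹ < l⁻¹ := by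
        apply inv_strictAnti₀ hl0 hl
      nlinarith
    have h3 : α⁻¹ * Rq = G₁ + aMax + 1 := by
      rw [hαdef, inv_div, div_mul_cancel₀ _ (ne_of_gt hRqpos)]
    have h4 : 0 ≤ l * p xQ := by
      have := hP xQ; positivity
    nlinarith [haMaxbd xQ hxQSp]
  -- continuity of g on the window
  have gdiff : ∀ l m', l ∈ Set.Icc α β → m' ∈ Set.Icc α β →
      g l - g m' ≤ (Rp + Rq / α ^ 2) * |l - m'| := by
    intro l m' hl hm
    obtain ⟨zl, hzlSp, _, hgzl⟩ := key l
    have h1 : φ m' zl ≤ g m' := hgub m' zl hzlSp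
    have hl0 : 0 < l := lt_of_lt_of_le hαpos hl.1
    have hm0 : 0 < m' := lt_of_lt_of_le hαpos hm.1
    have hqz := hQ zl
    have hpz := hP zl
    have e1 : (l - m') * p zl ≤ |l - m'| * Rp :=
      mul_le_mul (le_abs_self _) (hRpbd zl hzlSp) hpz (abs_nonneg _)
    have e3 : |l⁻¹ - m'⁻¹| ≤ |l - m'| / α ^ 2 := by
      have heq : l⁻¹ - m'⁻¹ = (m' - l) / (l * m') := by field_simp
      rw [heq, abs_div, abs_of_pos (by positivity : (0:ℝ) < l * m')]
      have hαlm : α ^ 2 ≤ l * m' := by nlinarith [hl.1, hm.1, hαpos]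
      rw [abs_sub_comm]
      gcongr
    have e2 : (l⁻¹ - m'⁻¹) * q zl ≤ (|l - m'| / α ^ 2) * Rq := by
      have i1 : (l⁻¹ - m'⁻¹) * q zl ≤ |l⁻¹ - m'⁻¹| * q zl :=
        mul_le_mul_of_nonneg_right (le_abs_self _) hqz
      have i2 : |l⁻¹ - m'⁻¹| * q zl ≤ |l⁻¹ - m'⁻¹| * Rq :=
        mul_le_mul_of_nonneg_left (hRqbd zl hzlSp) (abs_nonneg _)
      have i3 : |l⁻¹ - m'⁻¹| * Rq ≤ (|l - m'| / α ^ 2) * Rq :=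
        mul_le_mul_of_nonneg_right e3 hRq0
      linarith
    have hdiff : φ l zl - φ m' zl = (l - m') * p zl + (l⁻¹ - m'⁻¹) * q zl := by
      simp only [hφdef]; ring
    have : g l - g m' ≤ φ l zl - φ m' zl := by rw [hgzl]; linarith
    rw [hdiff] at this
    calc g l - g m' ≤ (l - m') * p zl + (l⁻¹ - m'⁻¹) * q zl := this
      _ ≤ |l - m'| * Rp + (|l - m'| / α ^ 2) * Rq := by linarith
      _ = (Rp + Rq / α ^ 2) * |l - m'| := by ring
  have hK0 : (0:ℝ) ≤ Rp + Rq / α ^ 2 := by positivity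
  have hgcont : ContinuousOn g (Set.Icc α β) := by
    have hlip : LipschitzOnWith (Real.toNNReal (Rp + Rq / α ^ 2)) g (Set.Icc α β) := by
      apply LipschitzOnWith.of_dist_le_mul
      intro l hl m' hm
      rw [Real.dist_eq, Real.dist_eq, Real.coe_toNNReal _ hK0]
      rw [abs_sub_le_iff]
      constructor
      · exact gdiff l m' hl hm
      · have := gdiff m' l hm hl
        rw [abs_sub_comm] at this
        exact this
    exact hlip.continuousOn
  -- minimizer of g on the window
  have h1mem : (1:ℝ) ∈ Set.Icc α β := ⟨hα1.le, hβ1.le⟩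
  obtain ⟨l₀, hl₀Icc, hl₀min'⟩ := isCompact_Icc.exists_isMinOn ⟨1, h1mem⟩ hgcont
  have hl₀min : ∀ l ∈ Set.Icc α β, g l₀ ≤ g l := fun l hl => hl₀min' hl
  have hl₀pos : 0 < l₀ := lt_of_lt_of_le hαpos hl₀Icc.1
  have hl₀ne : l₀ ≠ 0 := ne_of_gt hl₀pos
  have hglobal : ∀ l : ℝ, 0 < l → g l₀ ≤ g l := by
    intro l hl
    by_cases hin : l ∈ Set.Icc α β
    · exact hl₀min l hin
    · have hg1 : g l₀ ≤ g 1 := hl₀min 1 h1mem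
      rcases not_and_or.mp (by rwa [Set.mem_Icc] at hin) with hlo | hhi
      · have : l < α := lt_of_not_ge hlo
        linarith [houtα l hl this]
      · have : β < l := lt_of_not_ge hhi
        linarith [houtβ l this]
  set m : ℝ := g l₀ with hmdef
  clear_value m
  have hm0 : 0 ≤ m := by rw [hmdef]; exact hgpos l₀ hl₀pos
  -- the matrices M, Nm, D
  set M : Matrix (Fin N) (Fin N) ℝ := l₀ • P + l₀⁻¹ • Q - A with hMdef
  have hMs : Mᵀ = M := by
    rw [hMdef, Matrix.transpose_sub, Matrix.transpose_add, Matrix.transpose_smul,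
      Matrix.transpose_smul, hPs, hQs, hAs]
  have hqfM : ∀ x, qf M x = φ l₀ x := by
    intro x
    rw [hMdef, qf_sub, qf_add, qf_smul, qf_smul]
    simp only [hφdef, hpdef, hqdef, hadef]
  clear_value M
  have hMbound : ∀ y : Fin N → ℝ, qf M y ≤ m * (y ⬝ᵥ y) := by
    intro y
    by_cases hy : y = 0
    · subst hy
      simp [qf]
    · obtain ⟨huSp, hr⟩ := normalize_mem_Sp hy
      set r : ℝ := Real.sqrt (y ⬝ᵥ y) with hrdef
      have h1 : φ l₀ (r⁻¹ • y) ≤ m := by rw [hmdef]; exact hgub l₀ _ huSp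
      rw [← hqfM] at h1
      have h2 : qf M (r⁻¹ • y) = (r⁻¹) ^ 2 * qf M y := qf_smul_vec M r⁻¹ y
      have hr2 : r ^ 2 = y ⬝ᵥ y := Real.sq_sqrt (dot_self_nonneg y)
      rw [h2] at h1
      have := mul_le_mul_of_nonneg_left h1 (by positivity : (0:ℝ) ≤ r ^ 2)
      have hrr : r ^ 2 * ((r⁻¹) ^ 2 * qf M y) = qf M y := by
        field_simp
      rw [hrr] at this
      calc qf M y ≤ r ^ 2 * m := this
        _ = m * (y ⬝ᵥ y) := by rw [hr2]; ring
  set Nm : Matrix (Fin N) (Fin N) ℝ := m • (1 : Matrix (Fin N) (Fin N) ℝ) - M with hNmdef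
  have hNs : Nmᵀ = Nm := by
    rw [hNmdef, Matrix.transpose_sub, Matrix.transpose_smul, Matrix.transpose_one, hMs]
  have hNpsd : ∀ y, 0 ≤ qf Nm y := by
    intro y
    rw [hNmdef, qf_sub, qf_smul, qf_one]
    linarith [hMbound y]
  have eigen : ∀ w ∈ Sp N, qf M w = m → M *ᵥ w = m • w := by
    intro w hwSp hwm
    have hww : w ⬝ᵥ w = 1 := hwSp
    have h0 : qf Nm w = 0 := by
      rw [hNmdef, qf_sub, qf_smul, qf_one, hww, hwm]; ring
    have hker := qf_kernel hNs hNpsd h0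
    rw [hNmdef, sub_mulVec, smul_mulVec, one_mulVec] at hker
    have := sub_eq_zero.mp hker
    exact this.symm
  clear_value Nm
  -- the derivative function d
  set D : Matrix (Fin N) (Fin N) ℝ := l₀ • P - l₀⁻¹ • Q with hDdef
  set d : (Fin N → ℝ) → ℝ := fun x => l₀ * p x - l₀⁻¹ * q x with hddef
  have hqfD : ∀ x, qf D x = d x := by
    intro x
    rw [hDdef, qf_sub, qf_smul, qf_smul]
    simp only [hddef, hpdef, hqdef]
  have hdcont : Continuous d := by
    rw [hddef]
    exact (continuous_const.mul hcontp).sub (continuous_const.mul hcontq)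
  clear_value D d
  have hqfMcont : Continuous (fun x => qf M x) := qf_continuous M
  -- existence of a maximizer with nonnegative derivative
  have hxex : ∃ x ∈ Sp N, qf M x = m ∧ 0 ≤ d x := by
    by_contra hno
    push_neg at hno
    have hno' : ∀ x ∈ Sp N, qf M x = m → d x < 0 := hno
    set F : (Fin N → ℝ) → ℝ := fun x => max (m - qf M x) (-(d x)) with hFdef
    have hFcont : Continuous F := (continuous_const.sub hqfMcont).max hdcont.neg
    obtain ⟨xF, hxFSp, hxFmin⟩ := isCompact_Sp.exists_isMinOn hSpne hFcont.continuousOn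
    set δ : ℝ := F xF with hδdef
    have hδpos : 0 < δ := by
      rcases le_or_gt (m - qf M xF) 0 with hle | hlt
      · have hup : qf M xF ≤ m := by
          have := hMbound xF
          have hxx : xF ⬝ᵥ xF = 1 := hxFSp
          rw [hxx] at this; linarith
        have heq : qf M xF = m := le_antisymm hup (by linarith)
        have hdneg := hno' xF hxFSp heq
        calc (0:ℝ) < -(d xF) := by linarith
          _ ≤ δ := le_max_right _ _
      · calc (0:ℝ) < m - qf M xF := hlt
          _ ≤ δ := le_max_left _ _
    have hsplit : ∀ x ∈ Sp N, l₀ * p x + l₀⁻¹ * q x - a x ≤ m - δ ∨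
        l₀ * p x - l₀⁻¹ * q x ≤ -δ := by
      intro x hx
      have hFx : δ ≤ F x := hxFmin hx
      rcases le_max_iff.mp hFx with h | h
      · left
        have : qf M x ≤ m - δ := by linarith
        rw [hqfM] at this
        simpa only [hφdef] using this
      · right
        have : d x ≤ -δ := by linarith
        simpa only [hddef] using this
    obtain ⟨l, hlpos, hlt⟩ := aux (Sp N) p q a (fun x _ => hQ x) Rp Rq hRp0 hRq0
      hRpbd hRqbd l₀ hl₀pos m δ hδpos
      (fun x hx => by
        have := hgub l₀ x hx
        rw [hmdef]
        simpa only [hφdef] using this)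
      hsplit
    obtain ⟨zl, hzlSp, _, hgzl⟩ := key l
    have hc1 : g l < m := by
      rw [hgzl]
      have := hlt zl hzlSp
      simpa only [hφdef] using this
    linarith [hglobal l hlpos]
  -- existence of a maximizer with nonpositive derivative
  have hyex : ∃ y ∈ Sp N, qf M y = m ∧ d y ≤ 0 := by
    by_contra hno
    push_neg at hno
    have hno' : ∀ x ∈ Sp N, qf M x = m → 0 < d x := hno
    set F : (Fin N → ℝ) → ℝ := fun x => max (m - qf M x) (d x) with hFdef
    have hFcont : Continuous F := (continuous_const.sub hqfMcont).max hdcont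
    obtain ⟨xF, hxFSp, hxFmin⟩ := isCompact_Sp.exists_isMinOn hSpne hFcont.continuousOn
    set δ : ℝ := F xF with hδdef
    have hδpos : 0 < δ := by
      rcases le_or_gt (m - qf M xF) 0 with hle | hlt
      · have hup : qf M xF ≤ m := by
          have := hMbound xF
          have hxx : xF ⬝ᵥ xF = 1 := hxFSp
          rw [hxx] at this; linarith
        have heq : qf M xF = m := le_antisymm hup (by linarith)
        have hdpos := hno' xF hxFSp heq
        calc (0:ℝ) < d xF := hdpos
          _ ≤ δ := le_max_right _ _
      · calc (0:ℝ) < m - qf M xF := hlt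
          _ ≤ δ := le_max_left _ _
    have hl₀invpos : 0 < l₀⁻¹ := by positivity
    have hsplit : ∀ x ∈ Sp N, l₀⁻¹ * q x + (l₀⁻¹)⁻¹ * p x - a x ≤ m - δ ∨
        l₀⁻¹ * q x - (l₀⁻¹)⁻¹ * p x ≤ -δ := by
      intro x hx
      have hFx : δ ≤ F x := hxFmin hx
      rw [inv_inv]
      rcases le_max_iff.mp hFx with h | h
      · left
        have : qf M x ≤ m - δ := by linarith
        rw [hqfM] at this
        simp only [hφdef] at this
        linarith
      · right
        simp only [hddef] at h
        linarith
    obtain ⟨l', hl'pos, hlt'⟩ := aux (Sp N) q p a (fun x _ => hP x) Rq Rp hRq0 hRp0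
      hRqbd hRpbd l₀⁻¹ hl₀invpos m δ hδpos
      (fun x hx => by
        have := hgub l₀ x hx
        simp only [hφdef] at this
        rw [hmdef, inv_inv]
        linarith)
      hsplit
    obtain ⟨zl, hzlSp, _, hgzl⟩ := key l'⁻¹
    have hl'invpos : 0 < l'⁻¹ := by positivity
    have hc1 : g l'⁻¹ < m := by
      rw [hgzl]
      have := hlt' zl hzlSp
      simp only [hφdef]
      rw [inv_inv]
      linarith
    linarith [hglobal l'⁻¹ hl'invpos]
  obtain ⟨x, hxSp, hxm, hxd⟩ := hxex
  obtain ⟨y, hySp, hym, hyd⟩ := hyex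
  -- a common final contradiction given a maximizer with zero derivative
  have final : ∀ z : Fin N → ℝ, z ≠ 0 → qf M z = m * (z ⬝ᵥ z) → d z = 0 → False := by
    intro z hz hqz hdz
    have haz : 0 < a z := hA z hz
    have hhyp := hyp z hz
    have hzz : 0 < z ⬝ᵥ z := dot_self_pos hz
    have hE : l₀ * p z + l₀⁻¹ * q z - a z = m * (z ⬝ᵥ z) := by
      rw [← hqz, hqfM]
      simp only [hφdef]
    simp only [hddef] at hdz
    have e5 : (l₀ * p z) * (l₀⁻¹ * q z) = p z * q z := by
      field_simp
    have hmz : 0 ≤ m * (z ⬝ᵥ z) := mul_nonneg hm0 hzz.le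
    nlinarith [sq_nonneg (m * (z ⬝ᵥ z)), mul_nonneg hmz haz.le]
  rcases eq_or_lt_of_le hxd with hxd0 | hxdpos
  · -- d x = 0
    apply final x (Sp_ne_zero hxSp)
    · have hxx : x ⬝ᵥ x = 1 := hxSp
      rw [hxm, hxx, mul_one]
    · exact hxd0.symm
  rcases eq_or_lt_of_le hyd with hyd0 | hydneg
  · apply final y (Sp_ne_zero hySp)
    · have hyy : y ⬝ᵥ y = 1 := hySp
      rw [hym, hyy, mul_one]
    · exact hyd0
  -- main case : d x > 0 > d y, move along the eigen-path
  have hMx : M *ᵥ x = m • x := eigen x hxSp hxm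
  have hMy : M *ᵥ y = m • y := eigen y hySp hym
  -- replace y by ±y to ensure nonnegative inner product with x
  obtain ⟨y', hy'Sp, hMy', hdy', hxy'⟩ :
      ∃ y' , y' ∈ Sp N ∧ M *ᵥ y' = m • y' ∧ d y' < 0 ∧ 0 ≤ x ⬝ᵥ y' := by
    rcases le_or_gt 0 (x ⬝ᵥ y) with hpos | hneg
    · exact ⟨y, hySp, hMy, hydneg, hpos⟩
    · refine ⟨-y, ?_, ?_, ?_, ?_⟩
      · show (-y) ⬝ᵥ (-y) = 1
        have hyy : y ⬝ᵥ y = 1 := hySp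
        rw [neg_dotProduct, dotProduct_neg, neg_neg, hyy]
      · rw [mulVec_neg, hMy, smul_neg]
      · have : d (-y) = d y := by
          simp only [hddef, hpneg, hqneg]
        rw [this]; exact hydneg
      · rw [dotProduct_neg]; linarith
  set z : ℝ → (Fin N → ℝ) := fun t => (1 - t) • x + t • y' with hzdef
  have hxx : x ⬝ᵥ x = 1 := hxSp
  have hy'y' : y' ⬝ᵥ y' = 1 := hy'Sp
  have hzdot : ∀ t : ℝ, z t ⬝ᵥ z t
      = (1 - t) ^ 2 + 2 * t * (1 - t) * (x ⬝ᵥ y') + t ^ 2 := by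
    intro t
    simp only [hzdef, dotProduct_add, add_dotProduct, dotProduct_smul, smul_dotProduct,
      smul_eq_mul]
    rw [dotProduct_comm y' x, hxx, hy'y']
    ring
  have hzpos : ∀ t ∈ Set.Icc (0:ℝ) 1, 0 < z t ⬝ᵥ z t := by
    intro t ht
    rw [hzdot t]
    obtain ⟨ht0, ht1⟩ := ht
    nlinarith [mul_nonneg (mul_nonneg (by linarith : (0:ℝ) ≤ 2 * t) (by linarith : (0:ℝ) ≤ 1 - t)) hxy']
  have hzcont : Continuous z := by
    apply Continuous.add
    · exact (continuous_const.sub continuous_id).smul continuous_const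
    · exact continuous_id.smul continuous_const
  set f : ℝ → ℝ := fun t => qf D (z t) with hfdef
  have hfcont : Continuous f := (qf_continuous D).comp hzcont
  have hf0 : f 0 = d x := by
    simp only [hfdef, hzdef]
    norm_num
    exact hqfD x
  have hf1 : f 1 = d y' := by
    simp only [hfdef, hzdef]
    norm_num
    exact hqfD y'
  have hmem : (0:ℝ) ∈ Set.Icc (f 1) (f 0) := by
    rw [hf0, hf1]
    exact ⟨hdy'.le, hxdpos.le⟩
  obtain ⟨t₀, ht₀Icc, hft₀⟩ := intermediate_value_Icc' zero_le_one hfcont.continuousOn hmem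
  have hzznz : z t₀ ≠ 0 := by
    intro h
    have := hzpos t₀ ht₀Icc
    rw [h] at this
    simp at this
  have hMz : M *ᵥ z t₀ = m • z t₀ := by
    show M *ᵥ ((1 - t₀) • x + t₀ • y') = m • ((1 - t₀) • x + t₀ • y')
    rw [mulVec_add, mulVec_smul, mulVec_smul, hMx, hMy']
    rw [smul_add, smul_smul, smul_smul, smul_smul, smul_smul, mul_comm]
    congr 1
    rw [mul_comm]
  have hqz : qf M (z t₀) = m * (z t₀ ⬝ᵥ z t₀) := by
    rw [qf, hMz, dotProduct_smul, smul_eq_mul]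
  have hdz : d (z t₀) = 0 := by
    rw [← hqfD]
    exact hft₀
  exact final (z t₀) hzznz hqz hdz
lemma dot_mulVec_left {m k : ℕ} (E : Matrix (Fin m) (Fin k) ℝ) (x : Fin m → ℝ) (w : Fin k → ℝ) :
    x ⬝ᵥ (E *ᵥ w) = (Eᵀ *ᵥ x) ⬝ᵥ w := by
  rw [dotProduct_mulVec, ← mulVec_transpose]

lemma vecMulVec_mulVec' {m k : ℕ} (u : Fin m → ℝ) (w v : Fin k → ℝ) :
    (vecMulVec u w) *ᵥ v = (w ⬝ᵥ v) • u := by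
  ext i
  simp [vecMulVec_apply, mulVec, dotProduct, Finset.sum_mul, Finset.mul_sum, mul_comm,
    mul_assoc, mul_left_comm]

lemma amgm {k : ℕ} (lam : ℝ) (hlam : 0 < lam) (u w : Fin k → ℝ) :
    2 * (u ⬝ᵥ w) ≤ lam * (u ⬝ᵥ u) + lam⁻¹ * (w ⬝ᵥ w) := by
  have h := dot_self_nonneg (lam • u - w)
  simp only [dotProduct_sub, sub_dotProduct, dotProduct_smul, smul_dotProduct, smul_eq_mul] at h
  have hcomm : w ⬝ᵥ u = u ⬝ᵥ w := dotProduct_comm w u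
  rw [hcomm] at h
  rw [← mul_le_mul_iff_right₀ hlam]
  have h2 : lam * (lam⁻¹ * (w ⬝ᵥ w)) = w ⬝ᵥ w := by
    rw [← mul_assoc, mul_inv_cancel₀ (ne_of_gt hlam), one_mul]
  nlinarith [h, h2]

lemma cs {k : ℕ} {Fb : Matrix (Fin k) (Fin k) ℝ} (hsym : Fbᵀ = Fb) (hnn : ∀ x, 0 ≤ qf Fb x)
    (v w : Fin k → ℝ) : (w ⬝ᵥ (Fb *ᵥ v)) ^ 2 ≤ (v ⬝ᵥ (Fb *ᵥ v)) * (w ⬝ᵥ (Fb *ᵥ w)) := by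
  have key := quad_coeff (a := qf Fb v) (b := v ⬝ᵥ (Fb *ᵥ w)) (c := qf Fb w) (hnn v)
    (fun t => by
      have h := hnn (w + t • v)
      rw [qf_expand hsym w v t] at h
      linarith)
  rw [bilin_comm hsym v w] at key
  exact key

lemma real_psd_symm {k : ℕ} {Fb : Matrix (Fin k) (Fin k) ℝ} (hFb : Fb.PosSemidef) :
    Fbᵀ = Fb := by
  rw [← conjTranspose_eq_transpose_of_trivial]
  exact hFb.1

lemma real_psd_nonneg {k : ℕ} {Fb : Matrix (Fin k) (Fin k) ℝ} (hFb : Fb.PosSemidef) :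
    ∀ x, 0 ≤ qf Fb x := fun x => by
  have h2 := hFb.dotProduct_mulVec_nonneg x
  simpa [qf] using h2

lemma worst {pp qq : ℕ} (Fb : Matrix (Fin qq) (Fin qq) ℝ) (hFb : Fb.PosSemidef)
    (u : Fin pp → ℝ) (v : Fin qq → ℝ) :
    ∃ F : Matrix (Fin pp) (Fin qq) ℝ, (Fb - Fᵀ * F).PosSemidef ∧
      u ⬝ᵥ (F *ᵥ v) = Real.sqrt (u ⬝ᵥ u) * Real.sqrt (v ⬝ᵥ (Fb *ᵥ v)) := by
  have hsym : Fbᵀ = Fb := real_psd_symm hFb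
  have hnn : ∀ x, 0 ≤ qf Fb x := real_psd_nonneg hFb
  have hPP0 : 0 ≤ u ⬝ᵥ u := dot_self_nonneg u
  have hQQ0 : 0 ≤ v ⬝ᵥ (Fb *ᵥ v) := hnn v
  by_cases hz : (u ⬝ᵥ u) * (v ⬝ᵥ (Fb *ᵥ v)) = 0
  · refine ⟨0, by simpa using hFb, ?_⟩
    simp only [Matrix.zero_mulVec, dotProduct_zero]
    rcases mul_eq_zero.mp hz with h | h
    · rw [h, Real.sqrt_zero, zero_mul]
    · rw [h, Real.sqrt_zero, mul_zero]
  · have hPPpos : 0 < u ⬝ᵥ u := by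
      rcases lt_or_eq_of_le hPP0 with h | h
      · exact h
      · exact absurd (by rw [← h, zero_mul]) hz
    have hQQpos : 0 < v ⬝ᵥ (Fb *ᵥ v) := by
      rcases lt_or_eq_of_le hQQ0 with h | h
      · exact h
      · exact absurd (by rw [← h, mul_zero]) hz
    set c := Real.sqrt (u ⬝ᵥ u) with hcdef
    set dd := Real.sqrt (v ⬝ᵥ (Fb *ᵥ v)) with hdddef
    have hc2 : c ^ 2 = u ⬝ᵥ u := Real.sq_sqrt hPP0
    have hd2 : dd ^ 2 = v ⬝ᵥ (Fb *ᵥ v) := Real.sq_sqrt hQQ0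
    have hcpos : 0 < c := Real.sqrt_pos.mpr hPPpos
    have hdpos : 0 < dd := Real.sqrt_pos.mpr hQQpos
    set w : Fin qq → ℝ := Fb *ᵥ v with hwdef
    refine ⟨((c * dd)⁻¹) • vecMulVec u w, Matrix.PosSemidef.of_dotProduct_mulVec_nonneg ?_ ?_, ?_⟩
    · -- Hermitian
      rw [Matrix.IsHermitian, conjTranspose_eq_transpose_of_trivial, transpose_sub, hsym,
        transpose_mul, transpose_transpose]
    · -- form nonneg
      intro yv
      have hstar : star yv = yv := by simp
      rw [hstar, sub_mulVec, dotProduct_sub]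
      set F := ((c * dd)⁻¹) • vecMulVec u w with hFdef
      have hFv : F *ᵥ yv = (c * dd)⁻¹ • ((w ⬝ᵥ yv) • u) := by
        rw [hFdef, smul_mulVec, vecMulVec_mulVec']
      have hqd : yv ⬝ᵥ ((Fᵀ * F) *ᵥ yv) = (F *ᵥ yv) ⬝ᵥ (F *ᵥ yv) := by
        rw [← mulVec_mulVec, dot_mulVec_left, transpose_transpose]
      have hdot : (F *ᵥ yv) ⬝ᵥ (F *ᵥ yv)
          = ((c * dd)⁻¹) ^ 2 * ((w ⬝ᵥ yv) ^ 2 * (u ⬝ᵥ u)) := by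
        rw [hFv]
        simp only [dotProduct_smul, smul_dotProduct, smul_eq_mul]
        ring
      have hcs : (yv ⬝ᵥ (Fb *ᵥ v)) ^ 2 ≤ (v ⬝ᵥ (Fb *ᵥ v)) * (yv ⬝ᵥ (Fb *ᵥ yv)) :=
        cs hsym hnn v yv
      have hwy : w ⬝ᵥ yv = yv ⬝ᵥ (Fb *ᵥ v) := by
        rw [hwdef, dotProduct_comm]
      have hkey : ((c * dd)⁻¹) ^ 2 * ((w ⬝ᵥ yv) ^ 2 * (u ⬝ᵥ u)) ≤ yv ⬝ᵥ (Fb *ᵥ yv) := by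
        rw [hwy]
        have hfactor : ((c * dd)⁻¹) ^ 2 * (u ⬝ᵥ u) = (v ⬝ᵥ (Fb *ᵥ v))⁻¹ := by
          rw [mul_inv, mul_pow, ← hc2, ← hd2]
          field_simp
        calc ((c * dd)⁻¹) ^ 2 * ((yv ⬝ᵥ (Fb *ᵥ v)) ^ 2 * (u ⬝ᵥ u))
            = ((v ⬝ᵥ (Fb *ᵥ v))⁻¹) * (yv ⬝ᵥ (Fb *ᵥ v)) ^ 2 := by
              rw [← hfactor]; ring
          _ ≤ ((v ⬝ᵥ (Fb *ᵥ v))⁻¹) * ((v ⬝ᵥ (Fb *ᵥ v)) * (yv ⬝ᵥ (Fb *ᵥ yv))) := by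
              apply mul_le_mul_of_nonneg_left hcs (by positivity)
          _ = yv ⬝ᵥ (Fb *ᵥ yv) := by
              rw [← mul_assoc, inv_mul_cancel₀ (ne_of_gt hQQpos), one_mul]
      rw [hqd, hdot]
      linarith
    · -- the value
      rw [smul_mulVec, vecMulVec_mulVec']
      simp only [dotProduct_smul, smul_eq_mul]
      have hwv : w ⬝ᵥ v = v ⬝ᵥ (Fb *ᵥ v) := by rw [hwdef, dotProduct_comm]
      rw [hwv, ← hc2, ← hd2]
      field_simp


lemma dot_transpose (M : Matrix (Fin N) (Fin N) ℝ) (x : Fin N → ℝ) :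
    x ⬝ᵥ (Mᵀ *ᵥ x) = x ⬝ᵥ (M *ᵥ x) :=
  qf_transpose M x

end SPA

open SPA in
/-- Strict Petersen's lemma with a general positive semidefinite bound `Fb`. -/
theorem strict_petersen {n p q : ℕ}
    (C : Matrix (Fin n) (Fin n) ℝ) (hC : C.IsSymm)
    (E : Matrix (Fin n) (Fin p) ℝ) (G : Matrix (Fin q) (Fin n) ℝ)
    (Fb : Matrix (Fin q) (Fin q) ℝ) (hFb : Fb.PosSemidef) :
    (∀ F : Matrix (Fin p) (Fin q) ℝ, (Fb - Fᵀ * F).PosSemidef →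
      (-(C + E * F * G + Gᵀ * Fᵀ * Eᵀ)).PosDef) ↔
    (∃ lam : ℝ, 0 < lam ∧
      (-(C + lam • (E * Eᵀ) + lam⁻¹ • (Gᵀ * Fb * G))).PosDef) := by
  have hFbsym : Fbᵀ = Fb := real_psd_symm hFb
  have hCs : Cᵀ = C := hC
  have htrans : ∀ F : Matrix (Fin p) (Fin q) ℝ, (E * F * G)ᵀ = Gᵀ * Fᵀ * Eᵀ := by
    intro F
    rw [transpose_mul, transpose_mul, ← Matrix.mul_assoc]
  have htrans2 : ∀ F : Matrix (Fin p) (Fin q) ℝ, (Gᵀ * Fᵀ * Eᵀ)ᵀ = E * F * G := by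
    intro F
    rw [← htrans F, transpose_transpose]
  have hdotEFG : ∀ (F : Matrix (Fin p) (Fin q) ℝ) (x : Fin n → ℝ),
      x ⬝ᵥ ((E * F * G) *ᵥ x) = (Eᵀ *ᵥ x) ⬝ᵥ (F *ᵥ (G *ᵥ x)) := by
    intro F x
    rw [← mulVec_mulVec, ← mulVec_mulVec, dot_mulVec_left]
  have hdotGFE : ∀ (F : Matrix (Fin p) (Fin q) ℝ) (x : Fin n → ℝ),
      x ⬝ᵥ ((Gᵀ * Fᵀ * Eᵀ) *ᵥ x) = (Eᵀ *ᵥ x) ⬝ᵥ (F *ᵥ (G *ᵥ x)) := by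
    intro F x
    rw [← htrans F, dot_transpose, hdotEFG]
  have hqfEE : ∀ x : Fin n → ℝ, qf (E * Eᵀ) x = (Eᵀ *ᵥ x) ⬝ᵥ (Eᵀ *ᵥ x) := by
    intro x
    show x ⬝ᵥ ((E * Eᵀ) *ᵥ x) = _
    rw [← mulVec_mulVec, dot_mulVec_left]
  have hqfGFG : ∀ x : Fin n → ℝ, qf (Gᵀ * Fb * G) x = (G *ᵥ x) ⬝ᵥ (Fb *ᵥ (G *ᵥ x)) := by
    intro x
    show x ⬝ᵥ ((Gᵀ * Fb * G) *ᵥ x) = _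
    rw [← mulVec_mulVec, ← mulVec_mulVec, dot_mulVec_left, transpose_transpose]
  have hFtF : ∀ (F : Matrix (Fin p) (Fin q) ℝ) (v : Fin q → ℝ),
      v ⬝ᵥ ((Fᵀ * F) *ᵥ v) = (F *ᵥ v) ⬝ᵥ (F *ᵥ v) := by
    intro F v
    rw [← mulVec_mulVec, dot_mulVec_left, transpose_transpose]
  have hexpand : ∀ (lam' : ℝ) (x : Fin n → ℝ),
      x ⬝ᵥ ((-(C + lam' • (E * Eᵀ) + lam'⁻¹ • (Gᵀ * Fb * G))) *ᵥ x)
      = qf (-C) x - lam' * qf (E * Eᵀ) x - lam'⁻¹ * qf (Gᵀ * Fb * G) x := by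
    intro lam' x
    simp only [qf, neg_mulVec, dotProduct_neg, add_mulVec, dotProduct_add,
      smul_mulVec, dotProduct_smul, smul_eq_mul]
    ring
  have hexpand2 : ∀ (F : Matrix (Fin p) (Fin q) ℝ) (x : Fin n → ℝ),
      x ⬝ᵥ ((-(C + E * F * G + Gᵀ * Fᵀ * Eᵀ)) *ᵥ x)
      = -(x ⬝ᵥ (C *ᵥ x)) - 2 * ((Eᵀ *ᵥ x) ⬝ᵥ (F *ᵥ (G *ᵥ x))) := by
    intro F x
    rw [neg_mulVec, dotProduct_neg, add_mulVec, add_mulVec, dotProduct_add, dotProduct_add,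
      hdotEFG F x, hdotGFE F x]
    ring
  constructor
  · -- forward direction
    intro hAll
    have hA0 : (-C).PosDef := by
      have h0 := hAll 0 (by simpa using hFb)
      simpa using h0
    have hyp' : ∀ x : Fin n → ℝ, x ≠ 0 →
        4 * (qf (E * Eᵀ) x * qf (Gᵀ * Fb * G) x) < (qf (-C) x) ^ 2 := by
      intro x hx
      obtain ⟨F, hFps, hFval⟩ := worst Fb hFb (Eᵀ *ᵥ x) (G *ᵥ x)
      have hposd := (hAll F hFps).dotProduct_mulVec_pos hx
      rw [show star x = x by simp, hexpand2 F x, hFval] at hposd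
      have hqfa : qf (-C) x = -(x ⬝ᵥ (C *ᵥ x)) := by
        simp only [qf, neg_mulVec, dotProduct_neg]
      set s := Real.sqrt ((Eᵀ *ᵥ x) ⬝ᵥ (Eᵀ *ᵥ x)) with hsdef
      set t := Real.sqrt ((G *ᵥ x) ⬝ᵥ (Fb *ᵥ (G *ᵥ x))) with htdef
      have hs0 : 0 ≤ s := Real.sqrt_nonneg _
      have ht0 : 0 ≤ t := Real.sqrt_nonneg _
      have hs2 : s ^ 2 = (Eᵀ *ᵥ x) ⬝ᵥ (Eᵀ *ᵥ x) := Real.sq_sqrt (dot_self_nonneg _)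
      have ht2 : t ^ 2 = (G *ᵥ x) ⬝ᵥ (Fb *ᵥ (G *ᵥ x)) := Real.sq_sqrt (real_psd_nonneg hFb _)
      have hgt : 2 * (s * t) < qf (-C) x := by rw [hqfa]; linarith
      rw [hqfEE x, hqfGFG x, ← hs2, ← ht2]
      nlinarith [mul_nonneg hs0 ht0, hgt, mul_nonneg (mul_nonneg hs0 ht0) (mul_nonneg hs0 ht0)]
    obtain ⟨lam, hlam, hineq⟩ := core (E * Eᵀ) (Gᵀ * Fb * G) (-C)
      (by rw [transpose_mul, transpose_transpose])
      (by rw [transpose_mul, transpose_mul, transpose_transpose, hFbsym, ← Matrix.mul_assoc])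
      (by rw [transpose_neg, hCs])
      (fun x => by rw [hqfEE x]; exact dot_self_nonneg _)
      (fun x => by rw [hqfGFG x]; exact real_psd_nonneg hFb _)
      (fun x hx => by
        have := hA0.dotProduct_mulVec_pos hx
        rwa [show star x = x by simp] at this)
      hyp'
    refine ⟨lam, hlam, Matrix.PosDef.of_dotProduct_mulVec_pos ?_ ?_⟩
    · rw [Matrix.IsHermitian, conjTranspose_eq_transpose_of_trivial, transpose_neg,
        transpose_add, transpose_add, hCs, transpose_smul, transpose_smul,
        transpose_mul, transpose_transpose, transpose_mul, transpose_mul,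
        transpose_transpose, hFbsym, ← Matrix.mul_assoc]
    · intro x hx
      rw [show star x = x by simp, hexpand lam x]
      have := hineq x hx
      linarith
  · -- reverse direction
    rintro ⟨lam, hlam, hpd⟩ F hFpsd
    refine Matrix.PosDef.of_dotProduct_mulVec_pos ?_ ?_
    · rw [Matrix.IsHermitian, conjTranspose_eq_transpose_of_trivial, transpose_neg,
        transpose_add, transpose_add, hCs, htrans F, htrans2 F]
      congr 1
      abel
    · intro x hx
      have h0 := hpd.dotProduct_mulVec_pos hx
      rw [show star x = x by simp, hexpand lam x] at h0
      rw [show star x = x by simp, hexpand2 F x]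
      set u : Fin p → ℝ := Eᵀ *ᵥ x with hudef
      set v : Fin q → ℝ := G *ᵥ x with hvdef
      have hamgm := amgm lam hlam u (F *ᵥ v)
      have hFvbd : (F *ᵥ v) ⬝ᵥ (F *ᵥ v) ≤ v ⬝ᵥ (Fb *ᵥ v) := by
        have h1 := hFpsd.dotProduct_mulVec_nonneg v
        rw [show star v = v by simp, sub_mulVec, dotProduct_sub, hFtF F v] at h1
        linarith
      have hqfa : qf (-C) x = -(x ⬝ᵥ (C *ᵥ x)) := by
        simp only [qf, neg_mulVec, dotProduct_neg]
      have hEE : qf (E * Eᵀ) x = u ⬝ᵥ u := hqfEE x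
      have hGFG : qf (Gᵀ * Fb * G) x = v ⬝ᵥ (Fb *ᵥ v) := hqfGFG x
      have hscale : lam⁻¹ * ((F *ᵥ v) ⬝ᵥ (F *ᵥ v)) ≤ lam⁻¹ * (v ⬝ᵥ (Fb *ᵥ v)) :=
        mul_le_mul_of_nonneg_left hFvbd (by positivity)
      rw [hqfa, hEE, hGFG] at h0
      linarith
end

section
/- Let C ∈ ℝ^{n×n} be symmetric, E ∈ ℝ^{n×p} with E ≠ 0, G ∈ ℝ^{q×n} with G ≠ 0, and F̄ ∈ ℝ^{q×q} be symmetric positive definite. Then C + E F G + Gᵀ Fᵀ Eᵀ ⪯ 0 holds for all F ∈ ℝ^{p×q} with Fᵀ F ⪯ F̄ if and only if there exists λ > 0 such that C + λ E Eᵀ + λ⁻¹ Gᵀ F̄ G ⪯ 0. -/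
open Matrix

namespace PetersenAux

/-- Quadratic form of a matrix. -/
def qf {m : ℕ} (M : Matrix (Fin m) (Fin m) ℝ) (x : Fin m → ℝ) : ℝ := x ⬝ᵥ (M *ᵥ x)

lemma quad_nonneg_discrim (a b c : ℝ) (hc : 0 ≤ c)
    (h : ∀ t : ℝ, 0 ≤ a + 2*b*t + c*t^2) : b^2 ≤ a*c := by
  rcases eq_or_lt_of_le hc with hc0 | hc0
  · have hb : b = 0 := by
      by_contra hb
      have h1 := h (-(a+1)/(2*b))
      have he : a + 2*b*(-(a+1)/(2*b)) + c*(-(a+1)/(2*b))^2 = -1 := by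
        rw [← hc0]; field_simp; ring
      rw [he] at h1
      linarith
    have ha := h 0
    simp at ha
    nlinarith
  · have h1 := h (-b/c)
    have h2 : a + 2*b*(-b/c) + c*(-b/c)^2 = a - b^2/c := by field_simp; ring
    rw [h2] at h1
    have h3 : b^2/c ≤ a := by linarith
    calc b^2 = (b^2/c)*c := by field_simp
    _ ≤ a*c := by nlinarith

section

variable {m : ℕ} {M : Matrix (Fin m) (Fin m) ℝ}

lemma symm_dot (hM : Mᵀ = M) (x y : Fin m → ℝ) :
    x ⬝ᵥ (M *ᵥ y) = y ⬝ᵥ (M *ᵥ x) := by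
  rw [dotProduct_mulVec, ← mulVec_transpose, hM, dotProduct_comm]

lemma qf_expand (hM : Mᵀ = M) (x y : Fin m → ℝ) (t : ℝ) :
    qf M (x + t • y) = qf M x + 2*(x ⬝ᵥ (M *ᵥ y))*t + (qf M y)*t^2 := by
  have hs := symm_dot hM x y
  simp only [qf, mulVec_add, mulVec_smul, dotProduct_add, add_dotProduct,
    dotProduct_smul, smul_dotProduct, smul_eq_mul]
  rw [← hs]
  ring

lemma psd_symm (hM : M.PosSemidef) : Mᵀ = M := by
  have := hM.isHermitian
  simpa [Matrix.IsHermitian, Matrix.conjTranspose_eq_transpose_of_trivial] using this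

lemma qf_nonneg (hM : M.PosSemidef) (x : Fin m → ℝ) : 0 ≤ qf M x := by
  simpa [qf] using hM.dotProduct_mulVec_nonneg x

lemma psd_cs (hM : M.PosSemidef) (x y : Fin m → ℝ) :
    (x ⬝ᵥ (M *ᵥ y))^2 ≤ qf M x * qf M y := by
  apply quad_nonneg_discrim _ _ _ (qf_nonneg hM y)
  intro t
  have := qf_nonneg hM (x + t • y)
  rwa [qf_expand (psd_symm hM) x y t] at this

lemma psd_kernel (hM : M.PosSemidef) {x : Fin m → ℝ} (hx : qf M x = 0) :
    M *ᵥ x = 0 := by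
  funext i
  have h := psd_cs hM (Pi.single i 1) x
  rw [hx, mul_zero] at h
  have h2 : Pi.single i 1 ⬝ᵥ (M *ᵥ x) = (M *ᵥ x) i := by
    simp [Pi.single_apply, dotProduct]
  rw [h2] at h
  have : (M *ᵥ x) i ^ 2 = 0 := le_antisymm h (sq_nonneg _)
  simpa using pow_eq_zero_iff (n := 2) (by norm_num) |>.mp this

lemma qf_smul (c : ℝ) (x : Fin m → ℝ) : qf M (c • x) = c^2 * qf M x := by
  simp [qf, mulVec_smul, dotProduct_smul, smul_dotProduct]
  ring

lemma qf_continuous : Continuous (qf M) := by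
  unfold qf dotProduct mulVec
  exact continuous_finset_sum _ fun i _ =>
    (continuous_apply i).mul (continuous_finset_sum _ fun j _ =>
      continuous_const.mul (continuous_apply j))

lemma dot_self_pos {x : Fin m → ℝ} (hx : x ≠ 0) : 0 < x ⬝ᵥ x := by
  have hnn : 0 ≤ x ⬝ᵥ x := Finset.sum_nonneg fun i _ => mul_self_nonneg _
  rcases lt_or_eq_of_le hnn with h | h
  · exact h
  · exact absurd ((dotProduct_self_eq_zero).mp h.symm) hx

lemma psd_ne_zero_exists (hM : M.PosSemidef) (h0 : M ≠ 0) :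
    ∃ x : Fin m → ℝ, x ⬝ᵥ x = 1 ∧ 0 < qf M x := by
  have hex : ∃ x, qf M x ≠ 0 := by
    by_contra h
    push_neg at h
    apply h0
    ext i j
    have := congrFun (psd_kernel hM (h (Pi.single j 1))) i
    simpa [mulVec, dotProduct, Pi.single_apply] using this
  obtain ⟨x, hx⟩ := hex
  have hxq : 0 < qf M x := lt_of_le_of_ne (qf_nonneg hM x) (Ne.symm hx)
  have hx0 : x ≠ 0 := by rintro rfl; simp [qf] at hx
  have hdd : 0 < x ⬝ᵥ x := dot_self_pos hx0
  refine ⟨(Real.sqrt (x ⬝ᵥ x))⁻¹ • x, ?_, ?_⟩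
  · have : ((Real.sqrt (x ⬝ᵥ x))⁻¹ • x) ⬝ᵥ ((Real.sqrt (x ⬝ᵥ x))⁻¹ • x)
        = ((Real.sqrt (x ⬝ᵥ x))⁻¹)^2 * (x ⬝ᵥ x) := by
      simp [dotProduct_smul, smul_dotProduct]; ring
    rw [this, inv_pow, Real.sq_sqrt hdd.le]
    field_simp
  · rw [qf_smul]
    positivity


lemma psd_of (h1 : Mᵀ = M) (h2 : ∀ x, 0 ≤ qf M x) : M.PosSemidef := by
  refine Matrix.PosSemidef.of_dotProduct_mulVec_nonneg ?_ ?_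
  · simpa [Matrix.IsHermitian, Matrix.conjTranspose_eq_transpose_of_trivial] using h1
  · intro x
    simpa [qf] using h2 x

lemma dot_continuous : Continuous fun x : Fin m → ℝ => x ⬝ᵥ x := by
  unfold dotProduct
  exact continuous_finset_sum _ fun i _ =>
    (continuous_apply i).mul (continuous_apply i)

lemma qf_zero : qf M 0 = 0 := by simp [qf]

end

/-- Arithmetic kernel for perturbing `l` downwards. -/
lemma arith_down (l ε δ KA KB a b ψ μ : ℝ)
    (hl : 0 < l) (hδ : 0 < δ)
    (hε1 : 0 < ε) (hε2 : ε ≤ l/2)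
    (hε3 : ε ≤ δ*l^3/(4*(KB+1))) (hε4 : ε ≤ δ/(2*(KA + 2*KB/l^2 + 1)))
    (ha : 0 ≤ a) (hb : 0 ≤ b) (haK : a ≤ KA) (hbK : b ≤ KB)
    (hψ : ψ ≤ μ)
    (hcase : δ ≤ μ - ψ ∨ δ ≤ a - (l^2)⁻¹*b) :
    ψ + (-(ε*a) + ((l-ε)⁻¹ - l⁻¹)*b) ≤ μ - min (ε*δ/2) (δ/2) := by
  have hKA : 0 ≤ KA := le_trans ha haK
  have hKB : 0 ≤ KB := le_trans hb hbK
  have hle : l/2 ≤ l - ε := by linarith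
  have hle0 : 0 < l - ε := by linarith
  have hd : (l-ε)⁻¹ - l⁻¹ = ε/((l-ε)*l) := by
    rw [eq_div_iff (by positivity)]
    field_simp
    ring
  have hd0 : 0 ≤ (l-ε)⁻¹ - l⁻¹ := by
    rw [hd]; positivity
  rcases hcase with hc | hc
  · -- case: ψ far below μ
    have hmin : min (ε*δ/2) (δ/2) ≤ δ/2 := min_le_right _ _
    have hdb : ((l-ε)⁻¹ - l⁻¹)*b ≤ (2*ε/l^2)*KB := by
      have h1 : (l-ε)⁻¹ - l⁻¹ ≤ 2*ε/l^2 := by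
        rw [hd, div_le_div_iff₀ (by positivity) (by positivity)]
        nlinarith [mul_le_mul_of_nonneg_left (mul_le_mul_of_nonneg_right hle hl.le) hε1.le]
      calc ((l-ε)⁻¹ - l⁻¹)*b ≤ (2*ε/l^2)*b := by nlinarith
        _ ≤ (2*ε/l^2)*KB := by
            apply mul_le_mul_of_nonneg_left hbK (by positivity)
    have hεKB : (2*ε/l^2)*KB ≤ δ/2 := by
      have h2 : 0 < KA + 2*KB/l^2 + 1 := by positivity
      have h3 : ε * (2*(KA + 2*KB/l^2 + 1)) ≤ δ := by
        have h2' : 0 < 2*(KA + 2*KB/l^2 + 1) := by positivity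
        have := (le_div_iff₀ h2').mp hε4
        linarith [this]
      have h4 : (2*ε/l^2)*KB = ε * (2*KB/l^2) := by ring
      nlinarith [mul_nonneg hε1.le hKA, mul_nonneg hε1.le (by positivity : (0:ℝ) ≤ 2*KB/l^2)]
    nlinarith [mul_nonneg hε1.le ha]
  · -- case: derivative positive
    have hmin : min (ε*δ/2) (δ/2) ≤ ε*δ/2 := min_le_left _ _
    have hd2 : (l-ε)⁻¹ - l⁻¹ ≤ ε/l^2 + 2*ε^2/l^3 := by
      rw [hd, div_le_iff₀ (by positivity)]
      have expand : (ε/l^2 + 2*ε^2/l^3) * ((l-ε)*l) = ε*(l-ε)/l + 2*ε^2*(l-ε)/l^2 := by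
        field_simp
      rw [expand]
      have e1 : ε*(l-ε)/l = ε - ε^2/l := by field_simp
      rw [e1]
      have e2 : ε^2/l ≤ 2*ε^2*(l-ε)/l^2 := by
        rw [div_le_div_iff₀ hl (by positivity)]
        nlinarith [mul_le_mul_of_nonneg_left (mul_le_mul_of_nonneg_right hle hl.le) (sq_nonneg ε)]
      linarith
    have hD : -(ε*a) + ((l-ε)⁻¹ - l⁻¹)*b ≤ -(ε*δ) + 2*ε^2*KB/l^3 := by
      have h1 : ((l-ε)⁻¹ - l⁻¹)*b ≤ (ε/l^2)*b + (2*ε^2/l^3)*KB := by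
        have := mul_le_mul_of_nonneg_right hd2 hb
        have h2 : (2*ε^2/l^3)*b ≤ (2*ε^2/l^3)*KB :=
          mul_le_mul_of_nonneg_left hbK (by positivity)
        linarith [this, h2]
      have h3 : -(ε*a) + (ε/l^2)*b ≤ -(ε*δ) := by
        have h4 : ε*δ ≤ ε*(a - (l^2)⁻¹*b) := mul_le_mul_of_nonneg_left hc hε1.le
        have h5 : ε*(a - (l^2)⁻¹*b) = ε*a - (ε/l^2)*b := by ring
        linarith
      have h6 : (2*ε^2/l^3)*KB = 2*ε^2*KB/l^3 := by ring
      linarith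
    have hKB2 : 2*ε^2*KB/l^3 ≤ ε*δ/2 := by
      have h7 : 0 < 4*(KB+1) := by positivity
      have h8 : ε * (4*(KB+1)) ≤ δ*l^3 := by
        have := (le_div_iff₀ h7).mp hε3
        linarith [this]
      have h9 : 2*ε^2*KB/l^3 = ε * (2*ε*KB/l^3) := by ring
      have h10 : ε*δ/2 = ε*(δ/2) := by ring
      rw [h9, h10]
      apply mul_le_mul_of_nonneg_left _ hε1.le
      rw [div_le_iff₀ (by positivity : (0:ℝ) < l^3)]
      linarith [h8, hε1]
    linarith

/-- Arithmetic kernel for perturbing `l` upwards. -/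
lemma arith_up (l ε δ KA KB a b ψ μ : ℝ)
    (hl : 0 < l) (hδ : 0 < δ)
    (hε1 : 0 < ε) (hε2 : ε ≤ l/2)
    (hε3 : ε ≤ δ*l^3/(4*(KB+1))) (hε4 : ε ≤ δ/(2*(KA + 2*KB/l^2 + 1)))
    (ha : 0 ≤ a) (hb : 0 ≤ b) (haK : a ≤ KA) (hbK : b ≤ KB)
    (hψ : ψ ≤ μ)
    (hcase : δ ≤ μ - ψ ∨ δ ≤ (l^2)⁻¹*b - a) :
    ψ + (ε*a - (l⁻¹ - (l+ε)⁻¹)*b) ≤ μ - min (ε*δ/2) (δ/2) := by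
  have hKA : 0 ≤ KA := le_trans ha haK
  have hKB : 0 ≤ KB := le_trans hb hbK
  have hl2 : 0 < l + ε := by linarith
  have hd : l⁻¹ - (l+ε)⁻¹ = ε/(l*(l+ε)) := by
    rw [eq_div_iff (by positivity)]
    field_simp
    ring
  have hd0 : 0 ≤ l⁻¹ - (l+ε)⁻¹ := by rw [hd]; positivity
  rcases hcase with hc | hc
  · have hmin : min (ε*δ/2) (δ/2) ≤ δ/2 := min_le_right _ _
    have hεKA : ε*a ≤ δ/2 := by
      have h2 : 0 < KA + 2*KB/l^2 + 1 := by positivity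
      have h3 : ε * (2*(KA + 2*KB/l^2 + 1)) ≤ δ := by
        have h2' : 0 < 2*(KA + 2*KB/l^2 + 1) := by positivity
        have := (le_div_iff₀ h2').mp hε4
        linarith [this]
      nlinarith [mul_le_mul_of_nonneg_left haK hε1.le,
        mul_nonneg hε1.le (by positivity : (0:ℝ) ≤ 2*KB/l^2)]
    nlinarith [mul_nonneg hd0 hb]
  · have hmin : min (ε*δ/2) (δ/2) ≤ ε*δ/2 := min_le_left _ _
    have hd2 : ε/l^2 - ε^2/l^3 ≤ l⁻¹ - (l+ε)⁻¹ := by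
      have e0 : ε/l^2 - ε^2/l^3 = ε*(l-ε)/l^3 := by field_simp
      rw [e0, hd, div_le_div_iff₀ (by positivity) (by positivity)]
      nlinarith [mul_nonneg (mul_nonneg hε1.le (sq_nonneg ε)) hl.le]
    have hD : ε*a - (l⁻¹ - (l+ε)⁻¹)*b ≤ -(ε*δ) + ε^2*KB/l^3 := by
      have h1 : (ε/l^2 - ε^2/l^3)*b ≤ (l⁻¹ - (l+ε)⁻¹)*b :=
        mul_le_mul_of_nonneg_right hd2 hb
      have h2 : (ε^2/l^3)*b ≤ (ε^2/l^3)*KB :=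
        mul_le_mul_of_nonneg_left hbK (by positivity)
      have h3 : ε*a - (ε/l^2)*b ≤ -(ε*δ) := by
        have h4 : ε*δ ≤ ε*((l^2)⁻¹*b - a) := mul_le_mul_of_nonneg_left hc hε1.le
        have h5 : ε*((l^2)⁻¹*b - a) = (ε/l^2)*b - ε*a := by ring
        linarith
      have h6 : (ε^2/l^3)*KB = ε^2*KB/l^3 := by ring
      nlinarith
    have hKB2 : ε^2*KB/l^3 ≤ ε*δ/2 := by
      have h7 : 0 < 4*(KB+1) := by positivity
      have h8 : ε * (4*(KB+1)) ≤ δ*l^3 := by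
        have := (le_div_iff₀ h7).mp hε3
        linarith [this]
      have h9 : ε^2*KB/l^3 = ε * (ε*KB/l^3) := by ring
      have h10 : ε*δ/2 = ε*(δ/2) := by ring
      rw [h9, h10]
      apply mul_le_mul_of_nonneg_left _ hε1.le
      rw [div_le_iff₀ (by positivity : (0:ℝ) < l^3)]
      linarith [h8, hε1, mul_nonneg hε1.le hKB]
    linarith



set_option maxHeartbeats 3200000 in
lemma core {n : ℕ} (A B C : Matrix (Fin n) (Fin n) ℝ)
    (hA : A.PosSemidef) (hB : B.PosSemidef)
    (hA0 : A ≠ 0) (hB0 : B ≠ 0) (hCs : Cᵀ = C)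
    (hS : ∀ x : Fin n → ℝ, qf C x + 2 * Real.sqrt (qf A x * qf B x) ≤ 0) :
    ∃ lam : ℝ, 0 < lam ∧ ∀ x, qf C x + lam * qf A x + lam⁻¹ * qf B x ≤ 0 := by
  classical
  obtain ⟨φ, hφ⟩ : ∃ φ : ℝ → (Fin n → ℝ) → ℝ,
      φ = fun l x => qf C x + l * qf A x + l⁻¹ * qf B x := ⟨_, rfl⟩
  set K : Set (Fin n → ℝ) := {x | x ⬝ᵥ x = 1} with hKdef
  obtain ⟨x₀, hx₀K, hx₀A⟩ := psd_ne_zero_exists hA hA0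
  obtain ⟨x₁, hx₁K, hx₁B⟩ := psd_ne_zero_exists hB hB0
  have hx₀K' : x₀ ∈ K := hx₀K
  have hx₁K' : x₁ ∈ K := hx₁K
  have hKne : K.Nonempty := ⟨x₀, hx₀K'⟩
  have hKcl : IsClosed K := isClosed_eq dot_continuous continuous_const
  have hKb : K ⊆ Metric.closedBall 0 1 := by
    intro x hx
    have hx' : x ⬝ᵥ x = 1 := hx
    rw [Metric.mem_closedBall, dist_zero_right]
    rw [pi_norm_le_iff_of_nonneg zero_le_one]
    intro i
    have h1 : x i * x i ≤ x ⬝ᵥ x := by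
      unfold dotProduct
      have := Finset.single_le_sum (f := fun j => x j * x j)
        (fun j _ => mul_self_nonneg (x j)) (Finset.mem_univ i)
      simpa using this
    rw [hx'] at h1
    rw [Real.norm_eq_abs]
    nlinarith [abs_nonneg (x i), sq_abs (x i)]
  have hKcomp : IsCompact K :=
    (isCompact_closedBall (0 : Fin n → ℝ) 1).of_isClosed_subset hKcl hKb
  have hφc : ∀ l, Continuous (φ l) := fun l => by
    rw [hφ]
    exact (qf_continuous.add (continuous_const.mul qf_continuous)).add
      (continuous_const.mul qf_continuous)
  have hmaxex : ∀ l : ℝ, ∃ z ∈ K, ∀ y ∈ K, φ l y ≤ φ l z := by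
    intro l
    obtain ⟨z, hzK, hz⟩ := hKcomp.exists_isMaxOn hKne (hφc l).continuousOn
    exact ⟨z, hzK, fun y hy => hz hy⟩
  choose Z hZK hZmax using hmaxex
  obtain ⟨m, hm⟩ : ∃ m : ℝ → ℝ, m = fun l => φ l (Z l) := ⟨_, rfl⟩
  have hZmax' : ∀ (l : ℝ), ∀ y ∈ K, φ l y ≤ m l := by
    intro l y hy; rw [hm]; exact hZmax l y hy
  -- uniform bounds for the quadratic forms on K
  obtain ⟨zA, hzAK, hzAmax'⟩ := hKcomp.exists_isMaxOn hKne qf_continuous.continuousOn (f := qf A)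
  obtain ⟨zB, hzBK, hzBmax'⟩ := hKcomp.exists_isMaxOn hKne qf_continuous.continuousOn (f := qf B)
  obtain ⟨KA, hKA⟩ : ∃ KA : ℝ, KA = qf A zA := ⟨_, rfl⟩
  obtain ⟨KB, hKB⟩ : ∃ KB : ℝ, KB = qf B zB := ⟨_, rfl⟩
  have hzAmax : ∀ y ∈ K, qf A y ≤ KA := fun y hy => by rw [hKA]; exact hzAmax' hy
  have hzBmax : ∀ y ∈ K, qf B y ≤ KB := fun y hy => by rw [hKB]; exact hzBmax' hy
  have hKAnn : 0 ≤ KA := by rw [hKA]; exact qf_nonneg hA zA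
  have hKBnn : 0 ≤ KB := by rw [hKB]; exact qf_nonneg hB zB
  -- scaling
  have hscale : ∀ x : Fin n → ℝ, x ≠ 0 → ∃ y ∈ K, x = Real.sqrt (x ⬝ᵥ x) • y := by
    intro x hx
    have hd := dot_self_pos hx
    have hsq : Real.sqrt (x ⬝ᵥ x) ≠ 0 := by positivity
    refine ⟨(Real.sqrt (x ⬝ᵥ x))⁻¹ • x, ?_, ?_⟩
    · show ((Real.sqrt (x ⬝ᵥ x))⁻¹ • x) ⬝ᵥ ((Real.sqrt (x ⬝ᵥ x))⁻¹ • x) = 1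
      rw [smul_dotProduct, dotProduct_smul, smul_eq_mul, smul_eq_mul]
      rw [show (Real.sqrt (x ⬝ᵥ x))⁻¹ * ((Real.sqrt (x ⬝ᵥ x))⁻¹ * (x ⬝ᵥ x))
        = (x ⬝ᵥ x) / (Real.sqrt (x ⬝ᵥ x))^2 by ring]
      rw [Real.sq_sqrt hd.le]
      field_simp
    · rw [smul_smul, mul_inv_cancel₀ hsq, one_smul]
  -- coercivity bounds
  have hφ1x₁ : qf C x₁ ≤ m 1 := by
    have h1 := hZmax' 1 x₁ hx₁K'
    have h2 : qf C x₁ ≤ φ 1 x₁ := by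
      simp only [hφ, inv_one, one_mul]
      linarith [qf_nonneg hA x₁, qf_nonneg hB x₁]
    linarith
  have hφ0x₀ : qf C x₀ ≤ m 1 := by
    have h1 := hZmax' 1 x₀ hx₀K'
    have h2 : qf C x₀ ≤ φ 1 x₀ := by
      simp only [hφ, inv_one, one_mul]
      linarith [qf_nonneg hA x₀, qf_nonneg hB x₀]
    linarith
  have hD1 : 0 < m 1 - qf C x₁ + 1 := by linarith
  obtain ⟨aa, haa⟩ : ∃ aa : ℝ, aa = min 1 ((qf B x₁) / (m 1 - qf C x₁ + 1)) := ⟨_, rfl⟩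
  obtain ⟨bb, hbb⟩ : ∃ bb : ℝ, bb = max 1 ((m 1 - qf C x₀)/(qf A x₀) + 1) := ⟨_, rfl⟩
  have ha0 : 0 < aa := haa ▸ lt_min one_pos (div_pos hx₁B hD1)
  have hab : aa ≤ 1 := haa ▸ min_le_left _ _
  have h1b : (1:ℝ) ≤ bb := hbb ▸ le_max_left _ _
  have hlo : ∀ l, 0 < l → l < aa → m 1 < m l := by
    intro l hl hla
    have h1 : φ l x₁ ≤ m l := hZmax' l x₁ hx₁K'
    have h2 : qf C x₁ + l⁻¹ * qf B x₁ ≤ φ l x₁ := by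
      simp only [hφ]
      nlinarith [qf_nonneg hA x₁, hl.le]
    have hla' : l < qf B x₁ / (m 1 - qf C x₁ + 1) :=
      lt_of_lt_of_le hla (haa ▸ min_le_right _ _)
    rw [lt_div_iff₀ hD1] at hla'
    have h3 : (m 1 - qf C x₁ + 1) < l⁻¹ * qf B x₁ := by
      have h4 : m 1 - qf C x₁ + 1 = l⁻¹ * (l * (m 1 - qf C x₁ + 1)) := by
        field_simp
      rw [h4]
      exact mul_lt_mul_of_pos_left hla' (inv_pos.mpr hl)
    linarith
  have hhi : ∀ l, bb < l → m 1 < m l := by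
    intro l hlb
    have hl : 0 < l := lt_of_lt_of_le one_pos (le_of_lt (lt_of_le_of_lt h1b hlb))
    have h1 : φ l x₀ ≤ m l := hZmax' l x₀ hx₀K'
    have h2 : qf C x₀ + l * qf A x₀ ≤ φ l x₀ := by
      simp only [hφ]
      nlinarith [qf_nonneg hB x₀, inv_pos.mpr hl]
    have h5 : (m 1 - qf C x₀)/(qf A x₀) + 1 < l :=
      lt_of_le_of_lt (hbb ▸ le_max_right _ _ : _ ≤ bb) hlb
    have h6 : (m 1 - qf C x₀)/(qf A x₀) < l - 1 := by linarith
    rw [div_lt_iff₀ hx₀A] at h6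
    nlinarith [hx₀A]
  -- Lipschitz continuity of m on [aa, bb]
  have hkey : ∀ u v : ℝ, u ∈ Set.Icc aa bb → v ∈ Set.Icc aa bb →
      m u ≤ m v + (KA + KB/aa^2) * |u - v| := by
    intro u v hu hv
    have hu0 : 0 < u := lt_of_lt_of_le ha0 hu.1
    have hv0 : 0 < v := lt_of_lt_of_le ha0 hv.1
    have h1 : φ v (Z u) ≤ m v := hZmax' v (Z u) (hZK u)
    have h2 : m u = φ v (Z u) + (u - v)*qf A (Z u) + (u⁻¹ - v⁻¹)*qf B (Z u) := by
      rw [hm]; simp only [hφ]; ring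
    have hA1 : (u - v)*qf A (Z u) ≤ |u - v| * KA := by
      have hav := le_abs_self (u - v)
      have hqa := qf_nonneg hA (Z u)
      have hKAb := hzAmax (Z u) (hZK u)
      nlinarith [abs_nonneg (u - v)]
    have hB1 : (u⁻¹ - v⁻¹)*qf B (Z u) ≤ (|u - v|/aa^2) * KB := by
      have habs : |u⁻¹ - v⁻¹| ≤ |u - v|/aa^2 := by
        have he : u⁻¹ - v⁻¹ = (v - u)/(u*v) := by field_simp
        rw [he, abs_div, abs_sub_comm v u, abs_of_pos (mul_pos hu0 hv0)]
        apply div_le_div_of_nonneg_left (abs_nonneg _) (by positivity)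
        · nlinarith [hu.1, hv.1, ha0]
      have hqb := qf_nonneg hB (Z u)
      have hKBb := hzBmax (Z u) (hZK u)
      have h3 : (u⁻¹ - v⁻¹)*qf B (Z u) ≤ |u⁻¹ - v⁻¹| * qf B (Z u) :=
        mul_le_mul_of_nonneg_right (le_abs_self _) hqb
      have h4 : |u⁻¹ - v⁻¹| * qf B (Z u) ≤ (|u - v|/aa^2) * qf B (Z u) :=
        mul_le_mul_of_nonneg_right habs hqb
      have h5 : (|u - v|/aa^2) * qf B (Z u) ≤ (|u - v|/aa^2) * KB :=
        mul_le_mul_of_nonneg_left hKBb (by positivity)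
      linarith
    have h7 : |u - v| * KA + (|u - v|/aa^2) * KB = (KA + KB/aa^2) * |u - v| := by
      ring
    linarith
  have hLc : 0 ≤ KA + KB/aa^2 := by positivity
  have hLip : LipschitzOnWith (Real.toNNReal (KA + KB/aa^2)) m (Set.Icc aa bb) := by
    apply LipschitzOnWith.of_dist_le_mul
    intro u hu v hv
    rw [Real.dist_eq, Real.dist_eq, Real.coe_toNNReal _ hLc]
    rw [abs_sub_le_iff]
    constructor
    · have := hkey u v hu hv; linarith
    · have := hkey v u hv hu
      rw [abs_sub_comm v u] at this
      linarith
  obtain ⟨ls, hlsI, hlsmin'⟩ :=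
    isCompact_Icc.exists_isMinOn ⟨1, hab, h1b⟩ hLip.continuousOn
  have hlsmin : ∀ l ∈ Set.Icc aa bb, m ls ≤ m l := fun l hl => hlsmin' hl
  have hls0 : 0 < ls := lt_of_lt_of_le ha0 hlsI.1
  have hglobal : ∀ l, 0 < l → m ls ≤ m l := by
    intro l hl
    rcases le_or_gt l bb with h1 | h1
    · rcases le_or_gt aa l with h2 | h2
      · exact hlsmin l ⟨h2, h1⟩
      · have := hlo l hl h2
        have h3 := hlsmin 1 ⟨hab, h1b⟩
        linarith
    · have := hhi l h1
      have h3 := hlsmin 1 ⟨hab, h1b⟩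
      linarith
  obtain ⟨μ, hμdef⟩ : ∃ μ : ℝ, μ = m ls := ⟨_, rfl⟩
  -- if the minimum is nonpositive we are done
  rcases le_or_gt μ 0 with hμ | hμ
  · refine ⟨ls, hls0, ?_⟩
    intro x
    rcases eq_or_ne x 0 with rfl | hx
    · simp [qf]
    · obtain ⟨y, hyK, hxy⟩ := hscale x hx
      obtain ⟨sc, hsc⟩ : ∃ sc : ℝ, sc = Real.sqrt (x ⬝ᵥ x) := ⟨_, rfl⟩
      rw [← hsc] at hxy
      have h1 : φ ls y ≤ μ := hμdef ▸ hZmax' ls y hyK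
      have h2 : φ ls x = sc^2 * φ ls y := by
        simp only [hφ]
        rw [hxy, qf_smul, qf_smul, qf_smul]
        ring
      have h4 : sc^2 * φ ls y ≤ sc^2 * μ := mul_le_mul_of_nonneg_left h1 (sq_nonneg sc)
      have h5 : sc^2 * μ ≤ 0 := mul_nonpos_of_nonneg_of_nonpos (sq_nonneg sc) hμ
      have h3 : φ ls x ≤ 0 := by rw [h2]; linarith
      simpa only [hφ] using h3
  exfalso
  have hψle : ∀ x ∈ K, φ ls x ≤ μ := fun x hx => hμdef ▸ hZmax' ls x hx
  have hub : ∀ x, φ ls x ≤ μ * (x ⬝ᵥ x) := by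
    intro x
    rcases eq_or_ne x 0 with rfl | hx
    · have h0 : φ ls 0 = 0 := by simp [hφ, qf]
      simp [h0]
    · obtain ⟨y, hyK, hxy⟩ := hscale x hx
      obtain ⟨sc, hsc⟩ : ∃ sc : ℝ, sc = Real.sqrt (x ⬝ᵥ x) := ⟨_, rfl⟩
      rw [← hsc] at hxy
      have hsc2 : sc^2 = x ⬝ᵥ x := by rw [hsc]; exact Real.sq_sqrt (dot_self_pos hx).le
      have h1 : φ ls y ≤ μ := hψle y hyK
      have h2 : φ ls x = sc^2 * φ ls y := by
        simp only [hφ]; rw [hxy, qf_smul, qf_smul, qf_smul]; ring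
      have h4 : sc^2 * φ ls y ≤ sc^2 * μ := mul_le_mul_of_nonneg_left h1 (sq_nonneg sc)
      calc φ ls x = sc^2 * φ ls y := h2
        _ ≤ sc^2 * μ := h4
        _ = μ * (x ⬝ᵥ x) := by rw [← hsc2]; ring
  obtain ⟨N, hN⟩ : ∃ N, N = μ • (1 : Matrix (Fin n) (Fin n) ℝ) - (C + ls • A + ls⁻¹ • B) :=
    ⟨_, rfl⟩
  have hNq : ∀ x, qf N x = μ * (x ⬝ᵥ x) - φ ls x := by
    intro x
    rw [hN]
    simp only [hφ, qf, sub_mulVec, add_mulVec, smul_mulVec, one_mulVec,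
      dotProduct_sub, dotProduct_add, dotProduct_smul, smul_eq_mul]
    try ring
  have hNs : Nᵀ = N := by
    rw [hN, transpose_sub, transpose_add, transpose_add, transpose_smul, transpose_smul,
      transpose_smul, transpose_one, hCs, psd_symm hA, psd_symm hB]
  have hNpsd : N.PosSemidef := psd_of hNs (fun x => by rw [hNq x]; linarith [hub x])
  obtain ⟨hf, hhf⟩ : ∃ hf : (Fin n → ℝ) → ℝ, hf = fun x => qf A x - (ls^2)⁻¹ * qf B x :=
    ⟨_, rfl⟩
  have hhfc : Continuous hf := by
    rw [hhf]; exact qf_continuous.sub (continuous_const.mul qf_continuous)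
  have hhfsmul : ∀ (c : ℝ) (x : Fin n → ℝ), hf (c • x) = c^2 * hf x := by
    intro c x; rw [hhf]; simp only; rw [qf_smul, qf_smul]; ring
  -- extraction of a uniform gap
  have key : ∀ g : (Fin n → ℝ) → ℝ, Continuous g →
      (∀ x ∈ K, φ ls x = μ → 0 < g x) →
      ∃ δ : ℝ, 0 < δ ∧ ∀ x ∈ K, δ ≤ μ - φ ls x ∨ δ ≤ g x := by
    intro g hgc hgpos
    obtain ⟨xm, hxmK, hxmmin⟩ := hKcomp.exists_isMinOn hKne
      ((continuous_const.sub (hφc ls)).max hgc).continuousOn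
    refine ⟨max (μ - φ ls xm) (g xm), ?_, ?_⟩
    · rcases eq_or_lt_of_le (hψle xm hxmK) with he | hlt
      · exact lt_max_iff.mpr (Or.inr (hgpos xm hxmK he))
      · exact lt_max_iff.mpr (Or.inl (by linarith))
    · intro x hxK
      have hmm := hxmmin hxK
      exact le_max_iff.mp hmm
  have claim1 : ∃ x ∈ K, φ ls x = μ ∧ hf x ≤ 0 := by
    by_contra hcon
    push_neg at hcon
    obtain ⟨δ, hδ, hδK⟩ := key hf hhfc hcon
    obtain ⟨ε, hε1, hε2, hε3, hε4⟩ : ∃ ε : ℝ, 0 < ε ∧ ε ≤ ls/2 ∧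
        ε ≤ δ*ls^3/(4*(KB+1)) ∧ ε ≤ δ/(2*(KA + 2*KB/ls^2 + 1)) := by
      refine ⟨min (ls/2) (min (δ*ls^3/(4*(KB+1))) (δ/(2*(KA + 2*KB/ls^2 + 1)))),
        ?_, min_le_left _ _, le_trans (min_le_right _ _) (min_le_left _ _),
        le_trans (min_le_right _ _) (min_le_right _ _)⟩
      have c1 : (0:ℝ) < ls/2 := by positivity
      have c2 : (0:ℝ) < δ*ls^3/(4*(KB+1)) := by positivity
      have c3 : (0:ℝ) < δ/(2*(KA + 2*KB/ls^2 + 1)) := by positivity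
      exact lt_min c1 (lt_min c2 c3)
    have hbound : ∀ x ∈ K, φ (ls - ε) x ≤ μ - min (ε*δ/2) (δ/2) := by
      intro x hxK
      have hcase : δ ≤ μ - φ ls x ∨ δ ≤ qf A x - (ls^2)⁻¹ * qf B x := by
        rcases hδK x hxK with h | h
        · exact Or.inl h
        · right; rw [hhf] at h; exact h
      have harith := arith_down ls ε δ KA KB (qf A x) (qf B x) (φ ls x) μ hls0 hδ
        hε1 hε2 hε3 hε4 (qf_nonneg hA x) (qf_nonneg hB x) (hzAmax x hxK) (hzBmax x hxK)
        (hψle x hxK) hcase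
      have hexp : φ (ls - ε) x
          = φ ls x + (-(ε*qf A x) + ((ls-ε)⁻¹ - ls⁻¹)*qf B x) := by
        simp only [hφ]; ring
      rw [hexp]; exact harith
    have hlt : m (ls - ε) < μ := by
      have h1 := hbound (Z (ls - ε)) (hZK (ls - ε))
      have h2 : m (ls - ε) = φ (ls - ε) (Z (ls - ε)) := by rw [hm]
      have h3 : 0 < min (ε*δ/2) (δ/2) := lt_min (by positivity) (by positivity)
      rw [h2]; linarith
    have h4 := hglobal (ls - ε) (by linarith)
    rw [← hμdef] at h4
    linarith
  have claim2 : ∃ x ∈ K, φ ls x = μ ∧ 0 ≤ hf x := by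
    by_contra hcon
    push_neg at hcon
    have hcon' : ∀ x ∈ K, φ ls x = μ → 0 < -hf x := by
      intro x hx he; linarith [hcon x hx he]
    obtain ⟨δ, hδ, hδK⟩ := key (fun x => -hf x) hhfc.neg hcon'
    obtain ⟨ε, hε1, hε2, hε3, hε4⟩ : ∃ ε : ℝ, 0 < ε ∧ ε ≤ ls/2 ∧
        ε ≤ δ*ls^3/(4*(KB+1)) ∧ ε ≤ δ/(2*(KA + 2*KB/ls^2 + 1)) := by
      refine ⟨min (ls/2) (min (δ*ls^3/(4*(KB+1))) (δ/(2*(KA + 2*KB/ls^2 + 1)))),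
        ?_, min_le_left _ _, le_trans (min_le_right _ _) (min_le_left _ _),
        le_trans (min_le_right _ _) (min_le_right _ _)⟩
      have c1 : (0:ℝ) < ls/2 := by positivity
      have c2 : (0:ℝ) < δ*ls^3/(4*(KB+1)) := by positivity
      have c3 : (0:ℝ) < δ/(2*(KA + 2*KB/ls^2 + 1)) := by positivity
      exact lt_min c1 (lt_min c2 c3)
    have hbound : ∀ x ∈ K, φ (ls + ε) x ≤ μ - min (ε*δ/2) (δ/2) := by
      intro x hxK
      have hcase : δ ≤ μ - φ ls x ∨ δ ≤ (ls^2)⁻¹ * qf B x - qf A x := by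
        rcases hδK x hxK with h | h
        · exact Or.inl h
        · right
          rw [hhf] at h
          simp only at h
          linarith
      have harith := arith_up ls ε δ KA KB (qf A x) (qf B x) (φ ls x) μ hls0 hδ
        hε1 hε2 hε3 hε4 (qf_nonneg hA x) (qf_nonneg hB x) (hzAmax x hxK) (hzBmax x hxK)
        (hψle x hxK) hcase
      have hexp : φ (ls + ε) x
          = φ ls x + (ε*qf A x - (ls⁻¹ - (ls+ε)⁻¹)*qf B x) := by
        simp only [hφ]; ring
      rw [hexp]; exact harith
    have hlt : m (ls + ε) < μ := by
      have h1 := hbound (Z (ls + ε)) (hZK (ls + ε))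
      have h2 : m (ls + ε) = φ (ls + ε) (Z (ls + ε)) := by rw [hm]
      have h3 : 0 < min (ε*δ/2) (δ/2) := lt_min (by positivity) (by positivity)
      rw [h2]; linarith
    have h4 := hglobal (ls + ε) (by linarith)
    rw [← hμdef] at h4
    linarith
  obtain ⟨u₁, hu₁K, hu₁μ, hu₁h⟩ := claim1
  obtain ⟨u₂, hu₂K, hu₂μ, hu₂h⟩ := claim2
  have hker : ∀ x ∈ K, φ ls x = μ → N *ᵥ x = 0 := by
    intro x hxK hxμ
    apply psd_kernel hNpsd
    have hx1 : x ⬝ᵥ x = 1 := hxK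
    rw [hNq x, hxμ, hx1]
    ring
  have hKne0 : ∀ x ∈ K, x ≠ (0 : Fin n → ℝ) := by
    intro x hxK h0
    have hx1 : x ⬝ᵥ x = 1 := hxK
    rw [h0] at hx1
    simp at hx1
  have hzex : ∃ z : Fin n → ℝ, z ≠ 0 ∧ N *ᵥ z = 0 ∧ hf z = 0 := by
    rcases lt_or_eq_of_le hu₁h with h1lt | h1eq
    swap
    · exact ⟨u₁, hKne0 u₁ hu₁K, hker u₁ hu₁K hu₁μ, h1eq⟩
    rcases lt_or_eq_of_le hu₂h with h2lt | h2eq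
    swap
    · exact ⟨u₂, hKne0 u₂ hu₂K, hker u₂ hu₂K hu₂μ, h2eq.symm⟩
    obtain ⟨g, hg⟩ : ∃ g : ℝ → ℝ, g = fun t => hf ((1-t) • u₁ + t • u₂) := ⟨_, rfl⟩
    have hgc : Continuous g := by
      rw [hg]
      apply hhfc.comp
      exact ((continuous_const.sub continuous_id).smul continuous_const).add
        (continuous_id.smul continuous_const)
    have hg0 : g 0 < 0 := by
      rw [hg]
      simpa using h1lt
    have hg1 : (0:ℝ) < g 1 := by
      rw [hg]
      simpa using h2lt
    have hivt := intermediate_value_Icc (zero_le_one (α := ℝ)) hgc.continuousOn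
    obtain ⟨t, htI, hgt⟩ := hivt ⟨hg0.le, hg1.le⟩
    rw [hg] at hgt
    simp only at hgt
    refine ⟨(1-t) • u₁ + t • u₂, ?_, ?_, hgt⟩
    · intro h0
      have ht0 : t ≠ 0 := by
        rintro rfl
        rw [hg] at hg0
        simp only at hg0
        rw [show ((1:ℝ)-0) • u₁ + (0:ℝ) • u₂ = u₁ by simp] at h0
        exact hKne0 u₁ hu₁K h0
      have h2 : u₂ = (-(1-t)/t) • u₁ := by
        have hstep : t • u₂ = -((1-t) • u₁) := by
          have := h0
          rw [add_comm] at this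
          rw [← eq_neg_of_add_eq_zero_left this]
        calc u₂ = t⁻¹ • (t • u₂) := by rw [smul_smul, inv_mul_cancel₀ ht0, one_smul]
          _ = t⁻¹ • (-((1-t) • u₁)) := by rw [hstep]
          _ = (-(1-t)/t) • u₁ := by
              rw [smul_neg, smul_smul, ← neg_smul]
              congr 1
              field_simp
        -- done
      have h3 := hhfsmul (-(1-t)/t) u₁
      rw [← h2] at h3
      nlinarith [sq_nonneg (-(1-t)/t)]
    · rw [mulVec_add, mulVec_smul, mulVec_smul, hker u₁ hu₁K hu₁μ, hker u₂ hu₂K hu₂μ]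
      simp
  obtain ⟨z, hz0, hNz, hhz⟩ := hzex
  have hdz := dot_self_pos hz0
  have hqNz : qf N z = 0 := by simp [qf, hNz]
  have hφz : φ ls z = μ * (z ⬝ᵥ z) := by
    have := hNq z
    rw [hqNz] at this
    linarith
  have hBz : qf B z = ls^2 * qf A z := by
    rw [hhf] at hhz
    simp only at hhz
    have h1 : (ls^2)⁻¹ * qf B z = qf A z := by linarith
    calc qf B z = ls^2 * ((ls^2)⁻¹ * qf B z) := by field_simp
      _ = ls^2 * qf A z := by rw [h1]
  obtain ⟨s, hsdef⟩ : ∃ s : ℝ, s = ls * qf A z := ⟨_, rfl⟩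
  have hs0 : 0 ≤ s := hsdef ▸ mul_nonneg hls0.le (qf_nonneg hA z)
  have hsq : Real.sqrt (qf A z * qf B z) = s := by
    have h1 : qf A z * qf B z = s^2 := by rw [hsdef, hBz]; ring
    rw [h1, Real.sqrt_sq hs0]
  have hSz := hS z
  rw [hsq] at hSz
  have hCz : φ ls z = qf C z + 2*s := by
    simp only [hφ]
    rw [hBz, hsdef]
    field_simp
    ring
  nlinarith [mul_pos hμ hdz]
section Bridge

variable {n p q : ℕ}

lemma qfA_eq (E : Matrix (Fin n) (Fin p) ℝ) (x : Fin n → ℝ) :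
    qf (E * Eᵀ) x = (Eᵀ *ᵥ x) ⬝ᵥ (Eᵀ *ᵥ x) := by
  rw [qf, ← mulVec_mulVec, dotProduct_mulVec, ← mulVec_transpose]

lemma qfB_eq (G : Matrix (Fin q) (Fin n) ℝ) (Fb : Matrix (Fin q) (Fin q) ℝ)
    (x : Fin n → ℝ) :
    qf (Gᵀ * Fb * G) x = (G *ᵥ x) ⬝ᵥ (Fb *ᵥ (G *ᵥ x)) := by
  rw [qf, Matrix.mul_assoc, ← mulVec_mulVec, dotProduct_mulVec, vecMul_transpose,
    ← mulVec_mulVec]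

lemma vecMulVec_mulVec' (u : Fin p → ℝ) (v : Fin q → ℝ) (y : Fin q → ℝ) :
    vecMulVec u v *ᵥ y = (v ⬝ᵥ y) • u := by
  ext i
  simp only [mulVec, dotProduct, vecMulVec_apply, Pi.smul_apply, smul_eq_mul,
    Finset.sum_mul]
  exact Finset.sum_congr rfl fun j _ => by ring

lemma qf_transpose (M : Matrix (Fin n) (Fin n) ℝ) (x : Fin n → ℝ) :
    qf Mᵀ x = qf M x := by
  rw [qf, qf, mulVec_transpose, dotProduct_comm, ← dotProduct_mulVec]

lemma EEt_ne_zero {E : Matrix (Fin n) (Fin p) ℝ} (hE : E ≠ 0) : E * Eᵀ ≠ 0 := by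
  intro heq
  apply hE
  ext i k
  have h1 : (E * Eᵀ) i i = 0 := by rw [heq]; rfl
  rw [mul_apply] at h1
  simp only [transpose_apply] at h1
  have h2 : ∀ j ∈ Finset.univ, (0:ℝ) ≤ E i j * E i j := fun j _ => mul_self_nonneg _
  have h3 := (Finset.sum_eq_zero_iff_of_nonneg h2).mp h1 k (Finset.mem_univ k)
  simpa [mul_self_eq_zero] using h3

lemma GtFbG_ne_zero {G : Matrix (Fin q) (Fin n) ℝ} {Fb : Matrix (Fin q) (Fin q) ℝ}
    (hG : G ≠ 0) (hFb : Fb.PosDef) : Gᵀ * Fb * G ≠ 0 := by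
  intro heq
  apply hG
  ext j i
  have hx : G *ᵥ (Pi.single i 1) = 0 := by
    by_contra hw
    have h1 := hFb.dotProduct_mulVec_pos hw
    have h2 : qf (Gᵀ * Fb * G) (Pi.single i 1) = 0 := by rw [heq]; simp [qf]
    rw [qfB_eq] at h2
    simp only [star_trivial] at h1
    rw [h2] at h1
    exact lt_irrefl _ h1
  have := congrFun hx j
  simpa [mulVec, dotProduct, Pi.single_apply] using this

end Bridge

lemma dot_self_nonneg {k : ℕ} (x : Fin k → ℝ) : 0 ≤ x ⬝ᵥ x :=
  Finset.sum_nonneg fun i _ => mul_self_nonneg _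

section Bridge2

variable {n p q : ℕ}

lemma qf_EFG (E : Matrix (Fin n) (Fin p) ℝ) (F : Matrix (Fin p) (Fin q) ℝ)
    (G : Matrix (Fin q) (Fin n) ℝ) (x : Fin n → ℝ) :
    qf (E*F*G) x = (Eᵀ *ᵥ x) ⬝ᵥ (F *ᵥ (G *ᵥ x)) := by
  rw [qf, Matrix.mul_assoc, ← mulVec_mulVec, dotProduct_mulVec, ← mulVec_transpose,
    ← mulVec_mulVec]

lemma GFE_eq (E : Matrix (Fin n) (Fin p) ℝ) (F : Matrix (Fin p) (Fin q) ℝ)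
    (G : Matrix (Fin q) (Fin n) ℝ) : Gᵀ * Fᵀ * Eᵀ = (E*F*G)ᵀ := by
  rw [transpose_mul, transpose_mul, Matrix.mul_assoc]

lemma qf_neg (M : Matrix (Fin n) (Fin n) ℝ) (x : Fin n → ℝ) : qf (-M) x = -(qf M x) := by
  simp [qf, neg_mulVec]

lemma qf_add (M N : Matrix (Fin n) (Fin n) ℝ) (x : Fin n → ℝ) :
    qf (M + N) x = qf M x + qf N x := by
  simp [qf, add_mulVec, dotProduct_add]

lemma qf_AtA {p q : ℕ} (F : Matrix (Fin p) (Fin q) ℝ) (w : Fin q → ℝ) :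
    qf (Fᵀ * F) w = (F *ᵥ w) ⬝ᵥ (F *ᵥ w) := by
  rw [qf, ← mulVec_mulVec, dotProduct_mulVec, vecMul_transpose]

lemma qf_sub (M N : Matrix (Fin n) (Fin n) ℝ) (x : Fin n → ℝ) :
    qf (M - N) x = qf M x - qf N x := by
  simp [qf, sub_mulVec, dotProduct_sub]

lemma qf_rsmul (c : ℝ) (M : Matrix (Fin n) (Fin n) ℝ) (x : Fin n → ℝ) :
    qf (c • M) x = c * qf M x := by
  simp [qf, smul_mulVec, dotProduct_smul]

end Bridge2

end PetersenAux

open PetersenAux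

/-- Nonstrict Petersen's lemma. -/
theorem nonstrict_petersen {n p q : ℕ}
    (C : Matrix (Fin n) (Fin n) ℝ) (hC : C.IsSymm)
    (E : Matrix (Fin n) (Fin p) ℝ) (hE : E ≠ 0)
    (G : Matrix (Fin q) (Fin n) ℝ) (hG : G ≠ 0)
    (Fb : Matrix (Fin q) (Fin q) ℝ) (hFb : Fb.PosDef) :
    (∀ F : Matrix (Fin p) (Fin q) ℝ, (Fb - Fᵀ * F).PosSemidef →
      (-(C + E * F * G + Gᵀ * Fᵀ * Eᵀ)).PosSemidef) ↔
    (∃ lam : ℝ, 0 < lam ∧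
      (-(C + lam • (E * Eᵀ) + lam⁻¹ • (Gᵀ * Fb * G))).PosSemidef) := by
  have hCs : Cᵀ = C := hC
  have hFbpsd := hFb.posSemidef
  have hFbs : Fbᵀ = Fb := psd_symm hFbpsd
  have hApsd : (E * Eᵀ).PosSemidef := by
    apply psd_of
    · rw [transpose_mul, transpose_transpose]
    · intro x
      rw [qfA_eq]
      exact dot_self_nonneg _
  have hBpsd : (Gᵀ * Fb * G).PosSemidef := by
    apply psd_of
    · rw [transpose_mul, transpose_mul, transpose_transpose, hFbs, Matrix.mul_assoc]
    · intro x
      rw [qfB_eq]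
      simpa using hFbpsd.dotProduct_mulVec_nonneg (G *ᵥ x)
  have hqfBpos : ∀ w : Fin q → ℝ, w ≠ 0 → 0 < w ⬝ᵥ (Fb *ᵥ w) := by
    intro w hw
    simpa using hFb.dotProduct_mulVec_pos hw
  constructor
  · -- hard direction
    intro hyp
    have hS : ∀ x : Fin n → ℝ,
        qf C x + 2 * Real.sqrt (qf (E * Eᵀ) x * qf (Gᵀ * Fb * G) x) ≤ 0 := by
      intro x
      obtain ⟨u, hu⟩ : ∃ u, u = Eᵀ *ᵥ x := ⟨_, rfl⟩
      obtain ⟨w, hw⟩ : ∃ w, w = G *ᵥ x := ⟨_, rfl⟩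
      have hqA : qf (E * Eᵀ) x = u ⬝ᵥ u := by rw [qfA_eq, hu]
      have hqB : qf (Gᵀ * Fb * G) x = w ⬝ᵥ (Fb *ᵥ w) := by rw [qfB_eq, hw]
      have hC0 : qf C x ≤ 0 := by
        have h0 := hyp (0 : Matrix (Fin p) (Fin q) ℝ) (by simpa using hFbpsd)
        have h1 := qf_nonneg h0 x
        have h3 : C + E * (0 : Matrix (Fin p) (Fin q) ℝ) * G
            + Gᵀ * (0 : Matrix (Fin p) (Fin q) ℝ)ᵀ * Eᵀ = C := by
          simp
        rw [h3, qf_neg] at h1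
        linarith
      by_cases hu0 : u = 0
      · rw [hqA, hqB, hu0]
        simp [hC0]
      by_cases hw0 : w = 0
      · rw [hqA, hqB, hw0]
        simp [hC0]
      -- the interesting case
      obtain ⟨aq, haq⟩ : ∃ aq : ℝ, aq = Real.sqrt (u ⬝ᵥ u) := ⟨_, rfl⟩
      obtain ⟨bq, hbq⟩ : ∃ bq : ℝ, bq = Real.sqrt (w ⬝ᵥ (Fb *ᵥ w)) := ⟨_, rfl⟩
      have hupos := dot_self_pos hu0
      have hwpos := hqfBpos w hw0
      have ha : 0 < aq := haq ▸ Real.sqrt_pos.mpr hupos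
      have hb : 0 < bq := hbq ▸ Real.sqrt_pos.mpr hwpos
      have ha2 : aq^2 = u ⬝ᵥ u := by rw [haq]; exact Real.sq_sqrt hupos.le
      have hb2 : bq^2 = w ⬝ᵥ (Fb *ᵥ w) := by rw [hbq]; exact Real.sq_sqrt hwpos.le
      obtain ⟨v, hv⟩ : ∃ v, v = Fb *ᵥ w := ⟨_, rfl⟩
      obtain ⟨F, hFdef⟩ : ∃ F : Matrix (Fin p) (Fin q) ℝ,
        F = ((aq*bq)⁻¹) • vecMulVec u v := ⟨_, rfl⟩
      have hFy : ∀ y : Fin q → ℝ, F *ᵥ y = ((aq*bq)⁻¹ * (v ⬝ᵥ y)) • u := by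
        intro y
        rw [hFdef, smul_mulVec, vecMulVec_mulVec', smul_smul]
      have hqFF : ∀ y : Fin q → ℝ, qf (Fᵀ * F) y = ((aq*bq)⁻¹ * (v ⬝ᵥ y))^2 * (u ⬝ᵥ u) := by
        intro y
        rw [qf_AtA, hFy]
        rw [dotProduct_smul, smul_dotProduct]
        simp only [smul_eq_mul]
        ring
      have hcon : (Fb - Fᵀ * F).PosSemidef := by
        apply psd_of
        · rw [transpose_sub, transpose_mul, transpose_transpose, hFbs]
        · intro y
          have h1 : qf (Fb - Fᵀ * F) y = qf Fb y - qf (Fᵀ * F) y := by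
            simp [qf, sub_mulVec, dotProduct_sub]
          have h2 := psd_cs hFbpsd y w
          have h3 : y ⬝ᵥ (Fb *ᵥ w) = v ⬝ᵥ y := by rw [hv, dotProduct_comm]
          rw [h3] at h2
          have h4 : qf Fb w = w ⬝ᵥ (Fb *ᵥ w) := rfl
          rw [h4, ← hb2] at h2
          rw [h1, hqFF y, ← ha2]
          have h5 : ((aq*bq)⁻¹ * (v ⬝ᵥ y))^2 * aq^2 = (v ⬝ᵥ y)^2 / bq^2 := by
            field_simp
          rw [h5, sub_nonneg, div_le_iff₀ (by positivity : (0:ℝ) < bq^2)]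
          exact h2
      have hval := qf_nonneg (hyp F hcon) x
      have h6 : qf (E * F * G) x = aq * bq := by
        rw [qf_EFG, ← hu, ← hw, hFy]
        rw [dotProduct_smul]
        have h7 : v ⬝ᵥ w = bq^2 := by rw [hv, dotProduct_comm, ← hb2]
        rw [h7]
        simp only [smul_eq_mul]
        rw [← ha2]
        field_simp
      have h8 : qf (Gᵀ * Fᵀ * Eᵀ) x = aq * bq := by
        rw [GFE_eq, qf_transpose, h6]
      have h9 : qf (-(C + E * F * G + Gᵀ * Fᵀ * Eᵀ)) x
          = -(qf C x + aq*bq + aq*bq) := by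
        rw [qf_neg, qf_add, qf_add, h6, h8]
      rw [h9] at hval
      have h10 : Real.sqrt (qf (E * Eᵀ) x * qf (Gᵀ * Fb * G) x) = aq * bq := by
        rw [hqA, hqB, ← ha2, ← hb2]
        rw [show aq^2 * bq^2 = (aq*bq)^2 by ring]
        exact Real.sqrt_sq (by positivity)
      rw [h10]
      linarith
    obtain ⟨lam, hlam, hscal⟩ := core (E * Eᵀ) (Gᵀ * Fb * G) C hApsd hBpsd
      (EEt_ne_zero hE) (GtFbG_ne_zero hG hFb) hCs hS
    refine ⟨lam, hlam, ?_⟩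
    apply psd_of
    · rw [transpose_neg, transpose_add, transpose_add, transpose_smul, transpose_smul,
        hCs, transpose_mul, transpose_transpose, transpose_mul, transpose_mul,
        transpose_transpose, hFbs, Matrix.mul_assoc]
    · intro x
      rw [qf_neg, qf_add, qf_add, qf_rsmul, qf_rsmul]
      linarith [hscal x]
  · -- easy direction
    rintro ⟨lam, hlam, hpsd⟩ F hF
    apply psd_of
    · rw [transpose_neg, transpose_add, transpose_add, hCs, GFE_eq, transpose_transpose,
        ← GFE_eq]
      abel
    · intro x
      obtain ⟨u, hu⟩ : ∃ u, u = Eᵀ *ᵥ x := ⟨_, rfl⟩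
      obtain ⟨w, hw⟩ : ∃ w, w = G *ᵥ x := ⟨_, rfl⟩
      obtain ⟨r, hr⟩ : ∃ r, r = u ⬝ᵥ (F *ᵥ w) := ⟨_, rfl⟩
      have h6 : qf (E * F * G) x = r := by rw [qf_EFG, ← hu, ← hw, hr]
      have h8 : qf (Gᵀ * Fᵀ * Eᵀ) x = r := by rw [GFE_eq, qf_transpose, h6]
      rw [qf_neg, qf_add, qf_add, h6, h8]
      -- the quadratic bound
      obtain ⟨d, hd⟩ : ∃ d, d = lam • u - F *ᵥ w := ⟨_, rfl⟩
      have hdd : 0 ≤ d ⬝ᵥ d := dot_self_nonneg d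
      have hexp : d ⬝ᵥ d = lam^2 * (u ⬝ᵥ u) - 2*lam*r + (F *ᵥ w) ⬝ᵥ (F *ᵥ w) := by
        rw [hd, hr]
        simp only [dotProduct_sub, sub_dotProduct, dotProduct_smul, smul_dotProduct,
          smul_eq_mul]
        rw [dotProduct_comm (F *ᵥ w) u]
        ring
      have hFw : (F *ᵥ w) ⬝ᵥ (F *ᵥ w) ≤ w ⬝ᵥ (Fb *ᵥ w) := by
        have h1 := qf_nonneg hF w
        have h2 : qf (Fb - Fᵀ * F) w = w ⬝ᵥ (Fb *ᵥ w) - (F *ᵥ w) ⬝ᵥ (F *ᵥ w) := by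
          rw [qf_sub, qf_AtA]
          rfl
        rw [h2] at h1
        linarith
      have h2r : 2*r ≤ lam * (u ⬝ᵥ u) + lam⁻¹ * (w ⬝ᵥ (Fb *ᵥ w)) := by
        have h3 : 0 ≤ lam⁻¹ * (d ⬝ᵥ d) := mul_nonneg (by positivity) hdd
        rw [hexp] at h3
        have h4 : lam⁻¹ * (lam^2 * (u ⬝ᵥ u) - 2*lam*r + (F *ᵥ w) ⬝ᵥ (F *ᵥ w))
            = lam * (u ⬝ᵥ u) - 2*r + lam⁻¹ * ((F *ᵥ w) ⬝ᵥ (F *ᵥ w)) := by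
          field_simp
        rw [h4] at h3
        have h5 : lam⁻¹ * ((F *ᵥ w) ⬝ᵥ (F *ᵥ w)) ≤ lam⁻¹ * (w ⬝ᵥ (Fb *ᵥ w)) :=
          mul_le_mul_of_nonneg_left hFw (by positivity)
        linarith
      have hval := qf_nonneg hpsd x
      rw [qf_neg, qf_add, qf_add, qf_rsmul, qf_rsmul, qfA_eq, qfB_eq, ← hu, ← hw] at hval
      linarith
end

section
/- Let C ∈ ℝ^{n×n} be symmetric, E ∈ ℝ^{n×p}, G ∈ ℝ^{q×n}, F̄ ∈ ℝ^{q×q} symmetric positive semidefinite, and suppose there exists λ > 0 such that C + λ E Eᵀ + λ⁻¹ Gᵀ F̄ G ⪯ 0. Then C + E F G + Gᵀ Fᵀ Eᵀ ⪯ 0 for all F ∈ ℝ^{p×q} with Fᵀ F ⪯ F̄. -/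
/-! Completing the square, `λ E Eᴴ + λ⁻¹ (F G)ᴴ (F G) - (E F G + (E F G)ᴴ) = λ⁻¹ (λ Eᴴ - F G)ᴴ (λ Eᴴ - F G)`,
bounds the cross term by `λ E Eᴴ + λ⁻¹ Gᴴ Fᴴ F G`, and congruence by `G` turns `Fᴴ F ⪯ F̄` into
`Gᴴ Fᴴ F G ⪯ Gᴴ F̄ G`. -/

open Matrix
open scoped MatrixOrder ComplexOrder

namespace Matrix

variable {𝕜 m n k : Type*} [RCLike 𝕜] [Fintype m] [Fintype n] [Fintype k]

theorem mul_add_conjTranspose_mul_le {lam : ℝ} (hlam : 0 < lam) (A : Matrix m k 𝕜)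
    (B : Matrix k m 𝕜) :
    A * B + Bᴴ * Aᴴ ≤ lam • (A * Aᴴ) + lam⁻¹ • (Bᴴ * B) := by
  have hsq : lam • (A * Aᴴ) + lam⁻¹ • (Bᴴ * B) - (A * B + Bᴴ * Aᴴ)
      = lam⁻¹ • ((lam • Aᴴ - B)ᴴ * (lam • Aᴴ - B)) := by
    simp only [conjTranspose_sub, conjTranspose_smul, conjTranspose_conjTranspose, star_trivial,
      Matrix.sub_mul, Matrix.mul_sub, Matrix.smul_mul, Matrix.mul_smul, smul_sub, smul_smul]
    match_scalars <;> field_simp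
  rw [le_iff, hsq]
  exact (posSemidef_conjTranspose_mul_self _).smul (inv_nonneg.mpr hlam.le)

theorem conjTranspose_mul_mul_le_conjTranspose_mul_mul {P Q : Matrix n n 𝕜} (hPQ : P ≤ Q)
    (G : Matrix n m 𝕜) : Gᴴ * P * G ≤ Gᴴ * Q * G := by
  rw [le_iff, ← Matrix.sub_mul, ← Matrix.mul_sub]
  exact (le_iff.mp hPQ).conjTranspose_mul_mul_same G

end Matrix

theorem nonstrict_petersen_sufficiency_general {n p q : ℕ}
    (C : Matrix (Fin n) (Fin n) ℝ)
    (E : Matrix (Fin n) (Fin p) ℝ) (G : Matrix (Fin q) (Fin n) ℝ)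
    (Fb : Matrix (Fin q) (Fin q) ℝ)
    (lam : ℝ) (hlam : 0 < lam)
    (h : (-(C + lam • (E * Eᵀ) + lam⁻¹ • (Gᵀ * Fb * G))).PosSemidef) :
    ∀ F : Matrix (Fin p) (Fin q) ℝ, (Fb - Fᵀ * F).PosSemidef →
      (-(C + E * F * G + Gᵀ * Fᵀ * Eᵀ)).PosSemidef := by
  intro F hF
  have hyoung := mul_add_conjTranspose_mul_le hlam E (F * G)
  have hcongr := conjTranspose_mul_mul_le_conjTranspose_mul_mul (le_iff.mpr hF) G
  simp only [conjTranspose_eq_transpose_of_trivial, transpose_mul, ← Matrix.mul_assoc]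
    at hyoung hcongr
  rw [← zero_sub, ← le_iff] at h ⊢
  calc C + E * F * G + Gᵀ * Fᵀ * Eᵀ
      ≤ C + lam • (E * Eᵀ) + lam⁻¹ • (Gᵀ * Fᵀ * F * G) := by
        rw [add_assoc, add_assoc]; gcongr
    _ ≤ C + lam • (E * Eᵀ) + lam⁻¹ • (Gᵀ * Fb * G) := by gcongr
    _ ≤ 0 := h

/-- Sufficiency direction of the nonstrict Petersen's lemma. -/
theorem nonstrict_petersen_sufficiency {n p q : ℕ}
    (C : Matrix (Fin n) (Fin n) ℝ) (hC : C.IsSymm)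
    (E : Matrix (Fin n) (Fin p) ℝ) (G : Matrix (Fin q) (Fin n) ℝ)
    (Fb : Matrix (Fin q) (Fin q) ℝ) (hFb : Fb.PosSemidef)
    (lam : ℝ) (hlam : 0 < lam)
    (h : (-(C + lam • (E * Eᵀ) + lam⁻¹ • (Gᵀ * Fb * G))).PosSemidef) :
    ∀ F : Matrix (Fin p) (Fin q) ℝ, (Fb - Fᵀ * F).PosSemidef →
      (-(C + E * F * G + Gᵀ * Fᵀ * Eᵀ)).PosSemidef :=
  nonstrict_petersen_sufficiency_general C E G Fb lam hlam h
end

section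
/- Let A, B, C be r×r real symmetric matrices with A ⪰ 0, C ⪰ 0, and B ≺ 0. Suppose that (wᵀ B w)² − 4 (wᵀ A w)(wᵀ C w) > 0 for all nonzero w ∈ ℝ^r. Then there exists λ > 0 such that λ² A + λ B + C ≺ 0. -/
open Matrix

private lemma quad_interp {al be ga u v m t : ℝ} (hal : 0 ≤ al) (ht0 : 0 < t) (ht1 : t ≤ 1)
    (hu : al * u ^ 2 + be * u + ga ≤ m) (hv : al * v ^ 2 + be * v + ga < m) :
    al * (u + t * (v - u)) ^ 2 + be * (u + t * (v - u)) + ga < m := by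
  nlinarith [mul_nonneg (mul_nonneg (mul_nonneg ht0.le (sub_nonneg.mpr ht1)) hal) (sq_nonneg (v - u)),
    mul_nonneg (sub_nonneg.mpr ht1) (sub_nonneg.mpr hu), mul_pos ht0 (sub_pos.mpr hv)]

set_option maxHeartbeats 2000000 in
/-- Petersen's auxiliary lemma (Lemma A.4 of Petersen 1986). -/
theorem petersen_auxiliary {r : ℕ}
    (A B C : Matrix (Fin r) (Fin r) ℝ)
    (hA : A.PosSemidef) (hC : C.PosSemidef) (hB : (-B).PosDef)
    (h : ∀ w : Fin r → ℝ, w ≠ 0 →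
      (w ⬝ᵥ B.mulVec w) ^ 2 - 4 * (w ⬝ᵥ A.mulVec w) * (w ⬝ᵥ C.mulVec w) > 0) :
    ∃ lam : ℝ, 0 < lam ∧ (-(lam ^ 2 • A + lam • B + C)).PosDef := by
  classical
  -- Hermitian facts
  have hAh : A.IsHermitian := hA.1
  have hCh : C.IsHermitian := hC.1
  have hBh : B.IsHermitian := by
    have := hB.1.neg
    simpa using this
  -- abbreviations for the three quadratic forms
  set a : (Fin r → ℝ) → ℝ := fun w => w ⬝ᵥ A *ᵥ w with ha_def
  set b : (Fin r → ℝ) → ℝ := fun w => w ⬝ᵥ B *ᵥ w with hb_def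
  set c : (Fin r → ℝ) → ℝ := fun w => w ⬝ᵥ C *ᵥ w with hc_def
  set f : ℝ → (Fin r → ℝ) → ℝ := fun l w => a w * l ^ 2 + b w * l + c w with hf_def
  have hstar : ∀ x : Fin r → ℝ, star x = x := fun x => funext fun i => rfl
  have ha0 : ∀ w, 0 ≤ a w := fun w => by simpa [hstar] using hA.dotProduct_mulVec_nonneg w
  have hc0 : ∀ w, 0 ≤ c w := fun w => by simpa [hstar] using hC.dotProduct_mulVec_nonneg w
  have hb0 : ∀ w : Fin r → ℝ, w ≠ 0 → b w < 0 := by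
    intro w hw
    have := hB.dotProduct_mulVec_pos hw
    simp only [hstar, Matrix.neg_mulVec, dotProduct_neg] at this
    simpa [hb_def] using this
  have hD : ∀ w : Fin r → ℝ, w ≠ 0 → 0 < b w ^ 2 - 4 * (a w) * (c w) := by
    intro w hw; have := h w hw; linarith
  -- expansion of the quadratic form of the matrix pencil
  have hfM : ∀ (l : ℝ) (x : Fin r → ℝ),
      x ⬝ᵥ (l ^ 2 • A + l • B + C) *ᵥ x = f l x := by
    intro l x
    simp only [Matrix.add_mulVec, Matrix.smul_mulVec, dotProduct_add, dotProduct_smul,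
      smul_eq_mul, hf_def, ha_def, hb_def, hc_def]
    ring
  -- reduce to finding one good lambda for the quadratic forms
  suffices key : ∃ lam : ℝ, 0 < lam ∧ ∀ w : Fin r → ℝ, w ≠ 0 → f lam w < 0 by
    obtain ⟨lam, hlam, hkey⟩ := key
    refine ⟨lam, hlam, Matrix.PosDef.of_dotProduct_mulVec_pos ?_ ?_⟩
    · show (-(lam ^ 2 • A + lam • B + C)).IsHermitian
      have h1 : (lam ^ 2 • A).IsHermitian := by
        show _ᴴ = _
        rw [conjTranspose_smul, hAh.eq, star_trivial]
      have h2 : (lam • B).IsHermitian := by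
        show _ᴴ = _
        rw [conjTranspose_smul, hBh.eq, star_trivial]
      exact ((h1.add h2).add hCh).neg
    · intro x hx
      have := hkey x hx
      have hexp : star x ⬝ᵥ (-(lam ^ 2 • A + lam • B + C)) *ᵥ x = -(f lam x) := by
        rw [hstar, Matrix.neg_mulVec, dotProduct_neg, hfM]
      rw [hexp]
      linarith
  -- trivial case r = 0
  rcases Nat.eq_zero_or_pos r with hr0 | hrpos
  · refine ⟨1, one_pos, fun w hw => absurd ?_ hw⟩
    funext i
    exact absurd i.2 (by omega)
  -- now the sphere is nonempty
  by_contra hcon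
  push_neg at hcon
  -- hcon : ∀ lam, 0 < lam → ∃ w, w ≠ 0 ∧ 0 ≤ f lam w
  set K : Set (EuclideanSpace ℝ (Fin r)) := Metric.sphere (0 : EuclideanSpace ℝ (Fin r)) 1
    with hK_def
  have hKc : IsCompact K := isCompact_sphere _ _
  have i0 : Fin r := ⟨0, hrpos⟩
  have hw0K : (EuclideanSpace.single i0 (1:ℝ)) ∈ K := by
    simp [hK_def, EuclideanSpace.norm_single]
  have hKne : K.Nonempty := ⟨_, hw0K⟩
  have hKnorm : ∀ w : EuclideanSpace ℝ (Fin r), w ∈ K → ‖w‖ = 1 := by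
    intro w hw; simpa [hK_def] using hw
  have hKne0 : ∀ w : EuclideanSpace ℝ (Fin r), w ∈ K → (w : Fin r → ℝ) ≠ 0 := by
    intro w hw hw0
    have h1 : ‖w‖ = 1 := hKnorm w hw
    have h2 : w = (0 : EuclideanSpace ℝ (Fin r)) := by exact (WithLp.ofLp_eq_zero 2).mp hw0
    rw [h2, norm_zero] at h1
    norm_num at h1
  -- continuity of quadratic forms on E
  have hq : ∀ M : Matrix (Fin r) (Fin r) ℝ,
      Continuous fun w : EuclideanSpace ℝ (Fin r) => (w : Fin r → ℝ) ⬝ᵥ M *ᵥ w := by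
    intro M
    have hcoord : ∀ i, Continuous fun w : EuclideanSpace ℝ (Fin r) => (w : Fin r → ℝ) i :=
      fun i => (continuous_apply i).comp (PiLp.continuous_ofLp (p := 2) (β := fun _ => ℝ))
    unfold dotProduct Matrix.mulVec
    exact continuous_finset_sum _ fun i _ =>
      (hcoord i).mul (continuous_finset_sum _ fun j _ => (continuous_const.mul (hcoord j)))
  have hfc : ∀ l : ℝ, Continuous fun w : EuclideanSpace ℝ (Fin r) => f l w := by
    intro l
    simp only [hf_def, ha_def, hb_def, hc_def]
    exact (((hq A).mul continuous_const).add ((hq B).mul continuous_const)).add (hq C)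
  -- norm and dot product
  have hdotnorm : ∀ x : EuclideanSpace ℝ (Fin r), (x : Fin r → ℝ) ⬝ᵥ x = ‖x‖ ^ 2 := by
    intro x
    have := real_inner_self_eq_norm_sq x
    simp only [PiLp.inner_apply, RCLike.inner_apply, conj_trivial] at this
    simpa [dotProduct] using this
  -- scaling of quadratic forms
  have hqs : ∀ (M : Matrix (Fin r) (Fin r) ℝ) (t : ℝ) (x : Fin r → ℝ),
      (t • x) ⬝ᵥ M *ᵥ (t • x) = t ^ 2 * (x ⬝ᵥ M *ᵥ x) := by
    intro M t x
    rw [Matrix.mulVec_smul, dotProduct_smul, smul_dotProduct, smul_eq_mul, smul_eq_mul]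
    ring
  have hfs : ∀ (l t : ℝ) (x : Fin r → ℝ), f l (t • x) = t ^ 2 * f l x := by
    intro l t x
    simp only [hf_def, ha_def, hb_def, hc_def, hqs]
    ring
  -- f l x ≤ ‖x‖² * (sup of f l on K), stated via the chosen maximizer below.
  -- maximizers
  have hmaxex : ∀ l : ℝ, ∃ w, w ∈ K ∧ ∀ v ∈ K, f l v ≤ f l w := by
    intro l
    obtain ⟨w, hwK, hw⟩ := hKc.exists_isMaxOn hKne (hfc l).continuousOn
    exact ⟨w, hwK, fun v hv => hw hv⟩
  choose W hWK hWmax using hmaxex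
  set Φ : ℝ → ℝ := fun l => f l (W l) with hΦ_def
  -- bound: f l x ≤ ‖x‖² Φ l for every x
  have hfle : ∀ (l : ℝ) (x : EuclideanSpace ℝ (Fin r)), f l x ≤ ‖x‖ ^ 2 * Φ l := by
    intro l x
    rcases eq_or_ne x 0 with rfl | hx
    · have hz : f l (0 : Fin r → ℝ) = 0 := by
        simp [hf_def, ha_def, hb_def, hc_def, dotProduct]
      have hz' : f l (0 : EuclideanSpace ℝ (Fin r)) = 0 := hz
      rw [hz', norm_zero]
      norm_num
    · have hnx : 0 < ‖x‖ := norm_pos_iff.mpr hx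
      set u : EuclideanSpace ℝ (Fin r) := ‖x‖⁻¹ • x with hu_def
      have huK : u ∈ K := by
        simp only [hK_def, mem_sphere_zero_iff_norm, hu_def, norm_smul, norm_inv, norm_norm]
        field_simp
      have hxu : f l x = ‖x‖ ^ 2 * f l u := by
        have : f l ((‖x‖ : ℝ) • (u : Fin r → ℝ)) = ‖x‖ ^ 2 * f l u := hfs l ‖x‖ u
        have hx' : (‖x‖ : ℝ) • (u : Fin r → ℝ) = (x : Fin r → ℝ) := by
          show (‖x‖ : ℝ) • (‖x‖⁻¹ • (x : Fin r → ℝ)) = (x : Fin r → ℝ)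
          rw [smul_smul]
          rw [mul_inv_cancel₀ hnx.ne', one_smul]
        conv_lhs => rw [← hx']
        exact this
      rw [hxu]
      have := hWmax l u huK
      nlinarith [sq_nonneg ‖x‖]
  -- under the contradiction hypothesis, Φ l ≥ 0 for l > 0
  have hΦ0 : ∀ l : ℝ, 0 < l → 0 ≤ Φ l := by
    intro l hl
    obtain ⟨w, hw0, hwge⟩ := hcon l hl
    let wE : EuclideanSpace ℝ (Fin r) := WithLp.toLp 2 w
    have hwE : wE ≠ 0 := fun h0 => hw0 (by exact congrArg WithLp.ofLp h0)
    have h1 : f l wE ≤ ‖wE‖ ^ 2 * Φ l := hfle l wE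
    have h1' : f l w ≤ ‖wE‖ ^ 2 * Φ l := h1
    have h2 : 0 < ‖wE‖ := norm_pos_iff.mpr hwE
    by_contra hneg
    push_neg at hneg
    have h3 : ‖wE‖ ^ 2 * Φ l < 0 := mul_neg_of_pos_of_neg (pow_pos h2 2) hneg
    linarith
  -- bounds on K
  obtain ⟨wa, hwaK, hwa⟩ := hKc.exists_isMaxOn hKne (hq A).continuousOn
  obtain ⟨wb, hwbK, hwb⟩ := hKc.exists_isMaxOn hKne (hq B).continuousOn
  obtain ⟨wc, hwcK, hwc⟩ := hKc.exists_isMaxOn hKne (hq C).continuousOn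
  set am : ℝ := a wa with ham_def
  set bm : ℝ := b wb with hbm_def
  set cm : ℝ := c wc with hcm_def
  have ham : ∀ w ∈ K, a w ≤ am := fun w hw => hwa hw
  have hbm : ∀ w ∈ K, b w ≤ bm := fun w hw => hwb hw
  have hcm : ∀ w ∈ K, c w ≤ cm := fun w hw => hwc hw
  have ham0 : 0 ≤ am := ha0 wa
  have hcm0 : 0 ≤ cm := hc0 wc
  have hbm0 : bm < 0 := hb0 wb (hKne0 wb hwbK)
  -- choice of the right endpoint
  set Λ : ℝ := max 1 ((2 * cm + 1) / (-bm)) with hΛ_def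
  have hΛ1 : 1 ≤ Λ := le_max_left _ _
  have hΛ0 : 0 < Λ := lt_of_lt_of_le one_pos hΛ1
  have hΛb : Λ * bm + 2 * cm ≤ -1 := by
    have h1 : (2 * cm + 1) / (-bm) ≤ Λ := le_max_right _ _
    have h2 : 0 < -bm := by linarith
    have h3 : (2 * cm + 1) / (-bm) * (-bm) = 2 * cm + 1 :=
      div_mul_cancel₀ _ (show (-bm) ≠ 0 by linarith)
    have h4 : Λ * (-bm) = -(Λ * bm) := by ring
    linarith [mul_le_mul_of_nonneg_right h1 h2.le]
  -- continuity of Φ on [0, Λ]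
  obtain ⟨wg, hwgK, hwg⟩ := hKc.exists_isMaxOn hKne
    (((hq A).abs.add (hq B).abs).add (hq C).abs).continuousOn
  set R : ℝ := |a wg| + |b wg| + |c wg| with hR_def
  have hRb : ∀ w ∈ K, |a w| + |b w| + |c w| ≤ R := fun w hw => hwg hw
  have hR0 : 0 ≤ R := le_trans (by positivity) (hRb wa hwaK)
  set Cl : ℝ := (2 * Λ + 1) * R + 1 with hCl_def
  have hCl0 : 0 < Cl := by positivity
  have hΦdiff : ∀ l ∈ Set.Icc (0:ℝ) Λ, ∀ m ∈ Set.Icc (0:ℝ) Λ, Φ l - Φ m ≤ Cl * |l - m| := by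
    intro l hl m hm
    have h1 : Φ l = f l (W l) := rfl
    have h2 : f m (W l) ≤ Φ m := hWmax m (W l) (hWK l)
    have h3 : f l (W l) - f m (W l) ≤ Cl * |l - m| := by
      have hRw := hRb (W l) (hWK l)
      have hdiff : f l (W l) - f m (W l) = (l - m) * ((l + m) * a (W l) + b (W l)) := by
        simp only [hf_def]; ring
      have habs : |f l (W l) - f m (W l)| ≤ |l - m| * ((2 * Λ + 1) * R) := by
        rw [hdiff, abs_mul]
        apply mul_le_mul_of_nonneg_left _ (abs_nonneg _)
        have e1 : |(l + m) * a (W l) + b (W l)| ≤ |l + m| * |a (W l)| + |b (W l)| := by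
          calc |(l + m) * a (W l) + b (W l)| ≤ |(l + m) * a (W l)| + |b (W l)| := abs_add_le _ _
          _ = |l + m| * |a (W l)| + |b (W l)| := by rw [abs_mul]
        have e2 : |l + m| ≤ 2 * Λ := by
          rw [abs_le]; constructor <;> linarith [hl.1, hl.2, hm.1, hm.2]
        have e3 : |a (W l)| ≤ R := by
          linarith [abs_nonneg (b (W l)), abs_nonneg (c (W l))]
        have e4 : |b (W l)| ≤ R := by
          linarith [abs_nonneg (a (W l)), abs_nonneg (c (W l))]
        have e5 : |l + m| * |a (W l)| ≤ (2 * Λ) * R :=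
          mul_le_mul e2 e3 (abs_nonneg _) (by linarith)
        linarith [e1, e4, e5, hR0]
      have := abs_le.mp habs
      nlinarith [abs_nonneg (l - m)]
    calc Φ l - Φ m ≤ f l (W l) - f m (W l) := by rw [h1]; linarith
    _ ≤ Cl * |l - m| := h3
  have hΦcont : ContinuousOn Φ (Set.Icc 0 Λ) := by
    apply LipschitzOnWith.continuousOn (K := Real.toNNReal Cl)
    apply LipschitzOnWith.of_dist_le_mul
    intro x hx y hy
    rw [Real.dist_eq, Real.dist_eq, Real.coe_toNNReal _ hCl0.le]
    rw [abs_sub_le_iff]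
    constructor
    · exact hΦdiff x hx y hy
    · rw [abs_sub_comm]
      exact hΦdiff y hy x hx
  -- minimizer of Φ on [0, Λ]
  obtain ⟨ls, hlsmem, hlsmin'⟩ := isCompact_Icc.exists_isMinOn
    (Set.nonempty_Icc.mpr hΛ0.le) hΦcont
  have hlsmin : ∀ x ∈ Set.Icc (0:ℝ) Λ, Φ ls ≤ Φ x := fun x hx => hlsmin' hx
  -- the minimizer is positive
  have hlspos : 0 < ls := by
    rcases hlsmem.1.lt_or_eq with hpos | heq0
    · exact hpos
    · exfalso
      -- Φ ε < Φ 0 for small ε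
      set e : ℝ := min 1 ((-bm) / (2 * (am + 1))) with he_def
      have he0 : 0 < e := by
        apply lt_min one_pos
        apply div_pos (by linarith) (by linarith)
      have he1 : e ≤ 1 := min_le_left _ _
      have heam : e * am ≤ -bm / 2 := by
        have h1 : e ≤ (-bm) / (2 * (am + 1)) := min_le_right _ _
        have h2 : e * am ≤ (-bm) / (2 * (am + 1)) * am :=
          mul_le_mul_of_nonneg_right h1 ham0
        have h3 : (-bm) / (2 * (am + 1)) * am ≤ -bm / 2 := by
          rw [div_mul_eq_mul_div, div_le_div_iff₀ (by linarith) (by norm_num)]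
          nlinarith
        linarith
      have hΦe : Φ e < Φ 0 := by
        have hWe := hWK e
        have h1 : f e (W e) ≤ c (W e) + e * bm + e ^ 2 * am := by
          have hb' := hbm (W e) hWe
          have ha' := ham (W e) hWe
          simp only [hf_def]
          nlinarith [sq_nonneg e, he0]
        have h2 : c (W e) ≤ Φ 0 := by
          have hh := hWmax 0 (W e) hWe
          simp only [hf_def] at hh
          show c (W e) ≤ f 0 (W 0)
          simp only [hf_def]
          linarith
        have h3 : e * bm + e ^ 2 * am < 0 := by nlinarith
        calc Φ e = f e (W e) := rfl
        _ ≤ c (W e) + e * bm + e ^ 2 * am := h1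
        _ < c (W e) := by linarith
        _ ≤ Φ 0 := h2
      have hemem : e ∈ Set.Icc (0:ℝ) Λ := ⟨he0.le, le_trans he1 hΛ1⟩
      have hle' := hlsmin e hemem
      rw [← heq0] at hle'
      linarith
  have hμ0 : 0 ≤ Φ ls := hΦ0 ls hlspos
  -- the perturbation lemma
  have perturb : ∀ s : ℝ, s ≠ 0 → ls + s ∈ Set.Icc (0:ℝ) Λ →
      ∃ w, w ∈ K ∧ f ls w = Φ ls ∧ 0 ≤ s * (2 * ls * a w + b w) := by
    intro s hs hmem
    by_contra hno
    push_neg at hno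
    -- for every w in K there is a small step making f < Φ ls
    have hstep : ∀ w' : EuclideanSpace ℝ (Fin r), w' ∈ K → ∃ e : ℝ, 0 < e ∧ e ≤ 1 ∧ f (ls + e * s) w' < Φ ls := by
      intro w' hw'
      have hle := hWmax ls w' hw'
      rcases hle.lt_or_eq with hlt | heq
      · -- strict non-maximizer: stay below by a small move
        set hgap : ℝ := Φ ls - f ls w' with hgap_def
        have hgap0 : 0 < hgap := by simp only [hgap_def]; linarith
        set q : ℝ := |s * (2 * ls * a w' + b w')| + s ^ 2 * a w' + 1 with hq_def
        have hq0 : 0 < q := by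
          have h1 : 0 ≤ s ^ 2 * a w' := mul_nonneg (sq_nonneg s) (ha0 w')
          have h2 : 0 ≤ |s * (2 * ls * a w' + b w')| := abs_nonneg _
          simp only [hq_def]; linarith
        set e : ℝ := min 1 (hgap / q) with he_def
        refine ⟨e, lt_min one_pos (div_pos hgap0 hq0), min_le_left _ _, ?_⟩
        have he0 : 0 < e := lt_min one_pos (div_pos hgap0 hq0)
        have he1 : e ≤ 1 := min_le_left _ _
        have heq' : e * q ≤ hgap := by
          have := min_le_right (1:ℝ) (hgap / q)
          calc e * q ≤ (hgap / q) * q := mul_le_mul_of_nonneg_right this hq0.le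
          _ = hgap := by field_simp
        have hexp : f (ls + e * s) w' =
            f ls w' + (e * s) * (2 * ls * a w' + b w') + (e * s) ^ 2 * a w' := by
          simp only [hf_def]; ring
        rw [hexp]
        have t1 : (e * s) * (2 * ls * a w' + b w') ≤ e * |s * (2 * ls * a w' + b w')| := by
          calc (e * s) * (2 * ls * a w' + b w') = e * (s * (2 * ls * a w' + b w')) := by ring
          _ ≤ e * |s * (2 * ls * a w' + b w')| :=
            mul_le_mul_of_nonneg_left (le_abs_self _) he0.le
        have t2 : (e * s) ^ 2 * a w' ≤ e * (s ^ 2 * a w') := by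
          nlinarith [mul_nonneg (mul_nonneg (sub_nonneg.mpr he1) he0.le)
            (mul_nonneg (sq_nonneg s) (ha0 w'))]
        have t3 : e * |s * (2 * ls * a w' + b w')| + e * (s ^ 2 * a w') = e * q - e := by
          simp only [hq_def]; ring
        linarith
      · -- maximizer: use the assumed strict slope condition
        have hneg : s * (2 * ls * a w' + b w') < 0 := hno w' hw' heq
        set q : ℝ := s ^ 2 * a w' + 1 with hq_def
        have hq0 : 0 < q := by
          have h1 : 0 ≤ s ^ 2 * a w' := mul_nonneg (sq_nonneg s) (ha0 w')
          simp only [hq_def]; linarith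
        set e : ℝ := min 1 ((-(s * (2 * ls * a w' + b w'))) / q) with he_def
        have he0 : 0 < e := lt_min one_pos (div_pos (by linarith) hq0)
        refine ⟨e, he0, min_le_left _ _, ?_⟩
        have heq' : e * q ≤ -(s * (2 * ls * a w' + b w')) := by
          have := min_le_right (1:ℝ) ((-(s * (2 * ls * a w' + b w'))) / q)
          calc e * q ≤ ((-(s * (2 * ls * a w' + b w'))) / q) * q :=
            mul_le_mul_of_nonneg_right this hq0.le
          _ = -(s * (2 * ls * a w' + b w')) := by field_simp
        have hexp : f (ls + e * s) w' =
            f ls w' + (e * s) * (2 * ls * a w' + b w') + (e * s) ^ 2 * a w' := by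
          simp only [hf_def]; ring
        rw [hexp, heq]
        have he1 : e ≤ 1 := min_le_left _ _
        have t4 : e * (s ^ 2 * a w') ≤ -(s * (2 * ls * a w' + b w')) - e := by
          have hq' : e * q = e * (s ^ 2 * a w') + e := by simp only [hq_def]; ring
          linarith
        have u1 : (e * s) * (2 * ls * a w' + b w') = e * (s * (2 * ls * a w' + b w')) := by ring
        have u2 : (e * s) ^ 2 * a w' = e * (e * (s ^ 2 * a w')) := by ring
        have u3 : e * (e * (s ^ 2 * a w')) ≤ e * (-(s * (2 * ls * a w' + b w')) - e) :=
          mul_le_mul_of_nonneg_left t4 he0.le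
        have u4 : e * (-(s * (2 * ls * a w' + b w')) - e) = -(e * (s * (2 * ls * a w' + b w'))) - e ^ 2 := by ring
        linarith [pow_pos he0 2]
    -- choose the step for each point of K and extract a finite subcover
    choose eta heta0 heta1 heta2 using fun (i : {w : EuclideanSpace ℝ (Fin r) // w ∈ K}) => hstep i.1 i.2
    set U : {w : EuclideanSpace ℝ (Fin r) // w ∈ K} → Set (EuclideanSpace ℝ (Fin r)) := fun i => {v : EuclideanSpace ℝ (Fin r) | f (ls + eta i * s) v < Φ ls}
      with hU_def
    have hUopen : ∀ i, IsOpen (U i) := fun i => isOpen_lt (hfc _) continuous_const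
    have hUcov : K ⊆ ⋃ i, U i := by
      intro v hv
      exact Set.mem_iUnion.mpr ⟨⟨v, hv⟩, heta2 ⟨v, hv⟩⟩
    obtain ⟨t, ht⟩ := hKc.elim_finite_subcover U hUopen hUcov
    have htne : t.Nonempty := by
      obtain ⟨w0', hw0'⟩ := hKne
      obtain ⟨i, hi, _⟩ := Set.mem_iUnion₂.mp (ht hw0')
      exact ⟨i, hi⟩
    set eps : ℝ := t.inf' htne eta with heps_def
    have heps0 : 0 < eps := by
      rw [heps_def, Finset.lt_inf'_iff]
      exact fun i _ => heta0 i
    have hepsle : ∀ i ∈ t, eps ≤ eta i := fun i hi => Finset.inf'_le _ hi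
    -- every point of K is strictly below Φ ls at ls + eps * s
    have hall : ∀ v : EuclideanSpace ℝ (Fin r), v ∈ K → f (ls + eps * s) v < Φ ls := by
      intro v hv
      obtain ⟨i, hi, hvU⟩ := Set.mem_iUnion₂.mp (ht hv)
      have h1 : f (ls + eta i * s) v < Φ ls := hvU
      have h2 : f ls v ≤ Φ ls := hWmax ls v hv
      have h3 : 0 < eps / eta i := div_pos heps0 (heta0 i)
      have h4 : eps / eta i ≤ 1 := by
        rw [div_le_one (heta0 i)]; exact hepsle i hi
      have h5 := quad_interp (ha0 v) h3 h4 h2 h1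
      have hpt : ls + (eps / eta i) * ((ls + eta i * s) - ls) = ls + eps * s := by
        have h6 := (heta0 i).ne'
        field_simp
        ring
      rw [hpt] at h5
      exact h5
    -- contradiction with minimality
    have heps1 : eps ≤ 1 := by
      obtain ⟨i, hi⟩ := htne
      exact le_trans (Finset.inf'_le _ hi) (heta1 i)
    have hmem' : ls + eps * s ∈ Set.Icc (0:ℝ) Λ := by
      rcases lt_or_ge s 0 with hsneg | hspos
      · have h1 : s ≤ eps * s := by nlinarith
        have h2 : eps * s ≤ 0 := by nlinarith
        exact ⟨by linarith [hmem.1], by linarith [hlsmem.2]⟩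
      · have hspos' : 0 < s := lt_of_le_of_ne hspos (Ne.symm hs)
        have h1 : 0 ≤ eps * s := by nlinarith
        have h2 : eps * s ≤ s := by nlinarith
        exact ⟨by linarith [hlsmem.1], by linarith [hmem.2]⟩
    have := hlsmin (ls + eps * s) hmem'
    have := hall (W (ls + eps * s)) (hWK _)
    have hΦeq : Φ (ls + eps * s) = f (ls + eps * s) (W (ls + eps * s)) := rfl
    linarith [hΦeq ▸ this]
  -- need eps ≤ 1 fact used above; (provided inline)
  -- get the left maximizer
  obtain ⟨w₂, hw₂K, hw₂max, hw₂σ⟩ := perturb (-ls) (by linarith) (by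
    constructor <;> simp <;> linarith [hlsmem.2])
  have hσ₂ : 2 * ls * a w₂ + b w₂ ≤ 0 := by nlinarith
  rcases hlsmem.2.lt_or_eq with hlsΛ | hlseq
  · -- interior case: also get the right maximizer
    obtain ⟨w₁, hw₁K, hw₁max, hw₁σ⟩ := perturb (Λ - ls) (by linarith) (by
      constructor <;> simp <;> linarith [hlsmem.1])
    have hσ₁ : 0 ≤ 2 * ls * a w₁ + b w₁ := by nlinarith
    -- the positive semidefinite matrix N
    set μ : ℝ := Φ ls with hμ_def
    set N : Matrix (Fin r) (Fin r) ℝ := μ • (1 : Matrix (Fin r) (Fin r) ℝ)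
      - (ls ^ 2 • A + ls • B + C) with hN_def
    have hNdot : ∀ x : EuclideanSpace ℝ (Fin r), (x : Fin r → ℝ) ⬝ᵥ N *ᵥ x = μ * ‖x‖ ^ 2 - f ls x := by
      intro x
      rw [hN_def, Matrix.sub_mulVec, dotProduct_sub, hfM, Matrix.smul_mulVec,
        dotProduct_smul, Matrix.one_mulVec, smul_eq_mul, hdotnorm]
    have hNpsd : N.PosSemidef := by
      refine Matrix.PosSemidef.of_dotProduct_mulVec_nonneg ?_ ?_
      · show _ᴴ = _
        have hAt : Aᵀ = A := by
          have := hAh.eq; rwa [conjTranspose_eq_transpose_of_trivial] at this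
        have hBt : Bᵀ = B := by
          have := hBh.eq; rwa [conjTranspose_eq_transpose_of_trivial] at this
        have hCt : Cᵀ = C := by
          have := hCh.eq; rwa [conjTranspose_eq_transpose_of_trivial] at this
        rw [hN_def, conjTranspose_sub, conjTranspose_smul, conjTranspose_one,
          conjTranspose_add, conjTranspose_add, conjTranspose_smul, conjTranspose_smul]
        simp [conjTranspose_eq_transpose_of_trivial, hAt, hBt, hCt]
      · intro x
        rw [hstar]
        have := (hfle ls (WithLp.toLp 2 x) : f ls x ≤ ‖WithLp.toLp 2 x‖ ^ 2 * Φ ls)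
        have h2 : x ⬝ᵥ N *ᵥ x = μ * ‖WithLp.toLp 2 x‖ ^ 2 - f ls x := hNdot (WithLp.toLp 2 x)
        rw [h2]
        linarith
    -- kernel vectors
    have hker : ∀ w : EuclideanSpace ℝ (Fin r), w ∈ K → f ls w = Φ ls → N *ᵥ (w : Fin r → ℝ) = 0 := by
      intro w hw hfw
      apply (hNpsd.dotProduct_mulVec_zero_iff w).mp
      rw [hstar, hNdot w, hKnorm w hw, hfw]
      ring
    have hker₁ := hker w₁ hw₁K hw₁max
    have hker₂ := hker w₂ hw₂K hw₂max
    -- derive final contradiction from a zero-slope vector in the kernel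
    have final : ∀ x : Fin r → ℝ, x ≠ 0 → N *ᵥ x = 0 → 2 * ls * a x + b x = 0 → False := by
      intro x hx hxker hσx
      have hdot : x ⬝ᵥ N *ᵥ x = 0 := by rw [hxker, dotProduct_zero]
      have h1 : f ls x = μ * ‖WithLp.toLp 2 x‖ ^ 2 := by
        have : x ⬝ᵥ N *ᵥ x = μ * ‖WithLp.toLp 2 x‖ ^ 2 - f ls x := hNdot (WithLp.toLp 2 x)
        rw [hdot] at this
        linarith
      have h2 : 0 ≤ f ls x := by
        rw [h1]
        positivity
      have hDx := hD x hx
      -- with 2 ls a + b = 0 : f = c - ls² a, D = 4a(ls²a - c) = 4 a (-f) > 0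
      simp only [hf_def] at h2
      nlinarith [ha0 x, hc0 x]
    -- if one of the slopes vanishes, done
    rcases eq_or_lt_of_le hσ₁ with hσ₁eq | hσ₁pos
    · exact final w₁ (hKne0 w₁ hw₁K) hker₁ hσ₁eq.symm
    rcases eq_or_lt_of_le hσ₂ with hσ₂eq | hσ₂neg
    · exact final w₂ (hKne0 w₂ hw₂K) hker₂ hσ₂eq
    -- otherwise use the intermediate value theorem on the segment
    set p : ℝ → EuclideanSpace ℝ (Fin r) := fun t => w₁ + t • (w₂ - w₁) with hp_def
    have hpcont : Continuous p := by
      apply continuous_const.add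
      exact continuous_id.smul continuous_const
    set g : ℝ → ℝ := fun t => 2 * ls * a (p t) + b (p t) with hg_def
    have hgcont : Continuous g := by
      simp only [hg_def, ha_def, hb_def]
      exact (continuous_const.mul ((hq A).comp hpcont)).add ((hq B).comp hpcont)
    have hg0 : 0 < g 0 := by
      simp only [hg_def, hp_def]
      have : w₁ + (0:ℝ) • (w₂ - w₁) = w₁ := by simp
      rw [this]
      exact hσ₁pos
    have hg1 : g 1 < 0 := by
      simp only [hg_def, hp_def]
      have : w₁ + (1:ℝ) • (w₂ - w₁) = w₂ := by simp
      rw [this]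
      exact hσ₂neg
    have hmem0 : (0:ℝ) ∈ Set.Icc (g 1) (g 0) := ⟨hg1.le, hg0.le⟩
    obtain ⟨tb, htb, hgtb⟩ := intermediate_value_Icc' zero_le_one hgcont.continuousOn hmem0
    set x : EuclideanSpace ℝ (Fin r) := p tb with hx_def
    -- x is in the kernel of N
    have hxker : N *ᵥ (x : Fin r → ℝ) = 0 := by
      have : N *ᵥ ((w₁ : Fin r → ℝ) + tb • ((w₂ : Fin r → ℝ) - w₁)) = 0 := by
        rw [Matrix.mulVec_add, Matrix.mulVec_smul, Matrix.mulVec_sub, hker₁, hker₂]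
        simp
      exact this
    -- x is nonzero
    have hxne : (x : Fin r → ℝ) ≠ 0 := by
      intro h0
      have htb0 : tb ≠ 0 := by
        intro h'
        rw [hx_def, hp_def, h'] at h0
        simp only [zero_smul, add_zero] at h0
        exact hKne0 w₁ hw₁K h0
      have htb1 : tb ≠ 1 := by
        intro h'
        rw [hx_def, hp_def, h'] at h0
        simp only [one_smul] at h0
        have : (w₂ : Fin r → ℝ) = 0 := by
          have : w₁ + (w₂ - w₁) = (0 : EuclideanSpace ℝ (Fin r)) := (WithLp.ofLp_eq_zero 2).mp h0
          simpa using this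
        exact hKne0 w₂ hw₂K this
      -- tb • w₂ = (tb - 1) • w₁  (in the Euclidean space)
      have h0' : w₁ + tb • (w₂ - w₁) = (0 : EuclideanSpace ℝ (Fin r)) := (WithLp.ofLp_eq_zero 2).mp h0
      have hvecE : tb • w₂ = (tb - 1) • w₁ := by
        have hm : tb • w₂ - (tb - 1) • w₁ = w₁ + tb • (w₂ - w₁) := by module
        rw [h0'] at hm
        exact sub_eq_zero.mp hm
      have hqsE : ∀ (M : Matrix (Fin r) (Fin r) ℝ) (t : ℝ) (y : EuclideanSpace ℝ (Fin r)),
          ((t • y : EuclideanSpace ℝ (Fin r)) : Fin r → ℝ) ⬝ᵥ M *ᵥ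
            ((t • y : EuclideanSpace ℝ (Fin r)) : Fin r → ℝ) = t ^ 2 * ((y : Fin r → ℝ) ⬝ᵥ M *ᵥ y) :=
        fun M t y => hqs M t y
      have hσeq : 2 * ls * a (tb • w₂) + b (tb • w₂)
          = 2 * ls * a ((tb - 1) • w₁) + b ((tb - 1) • w₁) := by simp only [← WithLp.ofLp_smul, hvecE]
      have e1 : 2 * ls * a (tb • w₂) + b (tb • w₂) = tb ^ 2 * (2 * ls * a w₂ + b w₂) := by
        simp only [ha_def, hb_def]
        rw [hqs A, hqs B]
        ring
      have e2 : 2 * ls * a ((tb - 1) • w₁) + b ((tb - 1) • w₁)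
          = (tb - 1) ^ 2 * (2 * ls * a w₁ + b w₁) := by
        simp only [ha_def, hb_def]
        rw [hqs A, hqs B]
        ring
      have p1 : tb ^ 2 * (2 * ls * a w₂ + b w₂) < 0 :=
        mul_neg_of_pos_of_neg (by positivity) hσ₂neg
      have p2 : 0 < (tb - 1) ^ 2 * (2 * ls * a w₁ + b w₁) := by
        have htb1' : tb - 1 ≠ 0 := fun h' => htb1 (by linarith)
        exact mul_pos (by positivity) hσ₁pos
      linarith
    -- zero slope at x
    have hσx : 2 * ls * a (x : Fin r → ℝ) + b x = 0 := hgtb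
    exact final x hxne hxker hσx
  · -- boundary case ls = Λ : direct contradiction
    have hfw₂ : f ls w₂ = Φ ls := hw₂max
    have hb' := hbm w₂ hw₂K
    have hc' := hcm w₂ hw₂K
    have ha' := ha0 w₂
    have hμ : 0 ≤ f ls w₂ := by rw [hfw₂]; exact hμ0
    simp only [hf_def] at hμ
    rw [hlseq] at hσ₂ hμ
    nlinarith [mul_le_mul_of_nonneg_right hσ₂ hΛ0.le]
end

section
/- Let Φ ∈ ℝ^{s×q}, x ∈ ℝ^p, y ∈ ℝ^q, and let 𝓕 = {F ∈ ℝ^{p×q} : Fᵀ F ⪯ Φᵀ Φ}. Then the maximum over F ∈ 𝓕 of (xᵀ F y)² equals |x|² · |Φ y|², i.e., for every F ∈ 𝓕 one has (xᵀ F y)² ≤ |x|² |Φ y|², and there exists F ∈ 𝓕 attaining equality. -/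
open Matrix

private lemma cs_dot {n : ℕ} (a b : Fin n → ℝ) : (a ⬝ᵥ b)^2 ≤ (a ⬝ᵥ a)*(b ⬝ᵥ b) := by
  simpa [dotProduct, sq] using Finset.sum_mul_sq_le_sq_mul_sq Finset.univ a b

private lemma dot_self_nonneg {n : ℕ} (a : Fin n → ℝ) : 0 ≤ a ⬝ᵥ a :=
  Finset.sum_nonneg fun _ _ => mul_self_nonneg _

private lemma quad_eq {p q : ℕ} (F : Matrix (Fin p) (Fin q) ℝ) (z : Fin q → ℝ) :
    z ⬝ᵥ (Fᵀ*F).mulVec z = F.mulVec z ⬝ᵥ F.mulVec z := by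
  rw [← mulVec_mulVec, dotProduct_mulVec, vecMul_transpose]

/-- Variable-elimination lemma: `max_{F : FᵀF ⪯ ΦᵀΦ} (xᵀ F y)² = |x|² |Φ y|²`. -/
theorem max_quadratic_over_F {p q s : ℕ}
    (Phi : Matrix (Fin s) (Fin q) ℝ) (x : Fin p → ℝ) (y : Fin q → ℝ) :
    (∀ F : Matrix (Fin p) (Fin q) ℝ, (Phiᵀ * Phi - Fᵀ * F).PosSemidef →
      (x ⬝ᵥ F.mulVec y) ^ 2 ≤ (x ⬝ᵥ x) * (Phi.mulVec y ⬝ᵥ Phi.mulVec y)) ∧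
    (∃ F : Matrix (Fin p) (Fin q) ℝ, (Phiᵀ * Phi - Fᵀ * F).PosSemidef ∧
      (x ⬝ᵥ F.mulVec y) ^ 2 = (x ⬝ᵥ x) * (Phi.mulVec y ⬝ᵥ Phi.mulVec y)) := by
  set a : Fin s → ℝ := Phi.mulVec y with ha
  constructor
  · intro F hF
    have hq := hF.dotProduct_mulVec_nonneg y
    rw [star_trivial, sub_mulVec, dotProduct_sub, sub_nonneg, quad_eq, quad_eq] at hq
    calc (x ⬝ᵥ F.mulVec y) ^ 2 ≤ (x ⬝ᵥ x) * (F.mulVec y ⬝ᵥ F.mulVec y) := cs_dot x _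
      _ ≤ (x ⬝ᵥ x) * (a ⬝ᵥ a) := mul_le_mul_of_nonneg_left hq (dot_self_nonneg x)
  · by_cases hc : (x ⬝ᵥ x) * (a ⬝ᵥ a) = 0
    · refine ⟨0, ?_, by simp [hc]⟩
      simpa using (posSemidef_conjTranspose_mul_self Phi : ((Phiᴴ*Phi : Matrix _ _ ℝ)).PosSemidef)
    · have hx : 0 < x ⬝ᵥ x :=
        lt_of_le_of_ne (dot_self_nonneg x) (fun h => hc (by rw [← h]; ring))
      have hA : 0 < a ⬝ᵥ a :=
        lt_of_le_of_ne (dot_self_nonneg a) (fun h => hc (by rw [← h]; ring))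
      set c : ℝ := Real.sqrt (x ⬝ᵥ x) * Real.sqrt (a ⬝ᵥ a) with hcdef
      have hcpos : 0 < c := mul_pos (Real.sqrt_pos.2 hx) (Real.sqrt_pos.2 hA)
      have hc2 : c ^ 2 = (x ⬝ᵥ x) * (a ⬝ᵥ a) := by
        rw [hcdef, mul_pow, Real.sq_sqrt hx.le, Real.sq_sqrt hA.le]
      set b : Fin q → ℝ := Phi.vecMul a with hb
      set F : Matrix (Fin p) (Fin q) ℝ := Matrix.of (fun i j => x i * b j / c) with hF
      have hby : b ⬝ᵥ y = a ⬝ᵥ a := by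
        rw [hb, ← dotProduct_mulVec, ← ha]
      have hFz : ∀ z : Fin q → ℝ, F.mulVec z = fun i => x i * (b ⬝ᵥ z) / c := by
        intro z; funext i
        simp only [hF, mulVec, dotProduct, of_apply]
        rw [Finset.mul_sum, Finset.sum_div]
        refine Finset.sum_congr rfl fun j _ => by ring
      have hbz : ∀ z : Fin q → ℝ, b ⬝ᵥ z = a ⬝ᵥ Phi.mulVec z := by
        intro z; rw [hb, ← dotProduct_mulVec]
      refine ⟨F, posSemidef_iff_dotProduct_mulVec.mpr ⟨?_, ?_⟩, ?_⟩
      · have h1 : ((Phiᵀ*Phi : Matrix _ _ ℝ)).IsHermitian := by simpa using isHermitian_conjTranspose_mul_self Phi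
        have h2 : ((Fᵀ*F : Matrix _ _ ℝ)).IsHermitian := by simpa using isHermitian_conjTranspose_mul_self F
        exact h1.sub h2
      · intro z
        rw [star_trivial, sub_mulVec, dotProduct_sub, sub_nonneg, quad_eq, quad_eq, hFz]
        have : (fun i => x i * (b ⬝ᵥ z) / c) ⬝ᵥ (fun i => x i * (b ⬝ᵥ z) / c)
            = (x ⬝ᵥ x) * (b ⬝ᵥ z)^2 / c^2 := by
          simp only [dotProduct, sq]
          rw [Finset.sum_mul, Finset.sum_div]
          refine Finset.sum_congr rfl fun i _ => by ring
        rw [this, hc2, hbz]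
        rw [div_le_iff₀ (by positivity)]
        have := cs_dot a (Phi.mulVec z)
        calc (x ⬝ᵥ x) * (a ⬝ᵥ Phi.mulVec z) ^ 2
            ≤ (x ⬝ᵥ x) * ((a ⬝ᵥ a) * (Phi.mulVec z ⬝ᵥ Phi.mulVec z)) :=
              mul_le_mul_of_nonneg_left this hx.le
          _ = Phi.mulVec z ⬝ᵥ Phi.mulVec z * ((x ⬝ᵥ x) * (a ⬝ᵥ a)) := by ring
      · rw [hFz, show x ⬝ᵥ (fun i => x i * (b ⬝ᵥ y) / c) = (x ⬝ᵥ x) * (b ⬝ᵥ y) / c by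
          simp only [dotProduct]; rw [Finset.sum_mul, Finset.sum_div]
          exact Finset.sum_congr rfl fun i _ => by ring]
        rw [hby, div_pow, hc2]
        field_simp
end

section
/- Let X₀ ∈ ℝ^{n×T}, U₀ ∈ ℝ^{m×T} be such that the stacked matrix W₀ := [X₀; U₀] has full row rank, let A⋆ ∈ ℝ^{n×n}, B⋆ ∈ ℝ^{n×m}, D₀ ∈ ℝ^{n×T}, Δ ∈ ℝ^{n×n} with D₀ D₀ᵀ ⪯ Δ Δᵀ, and set X₁ := A⋆ X₀ + B⋆ U₀ + D₀. Define 𝐀 := W₀ W₀ᵀ, 𝐁 := −W₀ X₁ᵀ, 𝐂 := X₁ X₁ᵀ − Δ Δᵀ, and 𝐐 := 𝐁ᵀ 𝐀⁻¹ 𝐁 − 𝐂. Then 𝐀 ≻ 0 and 𝐐 ⪰ 0. -/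
/-!
`𝐀 = W₀ W₀ᵀ` is a Gram matrix of full rank, hence positive definite. Writing
`X₁ = D₀ + G W₀` with `G = [A⋆ B⋆]`, one has `𝐐 = Δ Δᵀ - X₁ (1 - P) X₁ᵀ`, where
`P = W₀ᵀ 𝐀⁻¹ W₀` is the projection onto the row space of `W₀`. Since `1 - P` annihilates the
rows of `W₀`, `X₁` may be replaced by `D₀`, and then
`𝐐 = (Δ Δᵀ - D₀ D₀ᵀ) + (D₀ W₀ᵀ) 𝐀⁻¹ (D₀ W₀ᵀ)ᵀ` is a sum of two positive semidefinite matrices.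
-/

open Matrix

namespace Matrix

variable {ι κ τ K : Type*} [Fintype κ] [Fintype τ] [DecidableEq κ]

theorem isUnit_of_rank_eq_card [Field K] {A : Matrix κ κ K}
    (h : A.rank = Fintype.card κ) : IsUnit A := by
  rw [← linearIndependent_rows_iff_isUnit, linearIndependent_iff_card_eq_finrank_span,
    Set.finrank, ← rank_eq_finrank_span_row, h]

open scoped ComplexOrder in
theorem posDef_self_mul_conjTranspose_of_rank_eq_card {𝕜 : Type*} [RCLike 𝕜]
    {W : Matrix κ τ 𝕜} (h : W.rank = Fintype.card κ) : (W * Wᴴ).PosDef :=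
  (posSemidef_self_mul_conjTranspose W).posDef_iff_isUnit.mpr
    (isUnit_of_rank_eq_card (by rw [rank_self_mul_conjTranspose, h]))

noncomputable def residualGram [CommRing K] (W : Matrix κ τ K) (X : Matrix ι τ K) :
    Matrix ι ι K :=
  X * Xᵀ - X * Wᵀ * (W * Wᵀ)⁻¹ * (W * Xᵀ)

theorem residualGram_add_mul [CommRing K] {W : Matrix κ τ K} (hW : IsUnit (W * Wᵀ).det)
    (X : Matrix ι τ K) (G : Matrix ι κ K) : residualGram W (X + G * W) = residualGram W X := by
  have inv_mul_cancel (Y : Matrix κ ι K) : (W * Wᵀ)⁻¹ * (W * (Wᵀ * Y)) = Y := by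
    rw [← Matrix.mul_assoc W, ← Matrix.mul_assoc, nonsing_inv_mul _ hW, Matrix.one_mul]
  have mul_inv_cancel (Y : Matrix κ ι K) : W * (Wᵀ * ((W * Wᵀ)⁻¹ * Y)) = Y := by
    rw [← Matrix.mul_assoc, ← Matrix.mul_assoc, mul_nonsing_inv _ hW, Matrix.one_mul]
  simp only [residualGram, transpose_add, transpose_mul, Matrix.add_mul, Matrix.mul_add,
    Matrix.mul_assoc, inv_mul_cancel, mul_inv_cancel]
  abel

end Matrix

/-- Lemma 1 of the paper: `𝐀 ≻ 0` and `𝐐 ⪰ 0` for the data-consistency ellipsoid. -/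
theorem data_ellipsoid_A_posDef_Q_posSemidef {n m T : ℕ}
    (X₀ : Matrix (Fin n) (Fin T) ℝ) (U₀ : Matrix (Fin m) (Fin T) ℝ)
    (A₀ : Matrix (Fin n) (Fin n) ℝ) (B₀ : Matrix (Fin n) (Fin m) ℝ)
    (D₀ : Matrix (Fin n) (Fin T) ℝ) (Δ : Matrix (Fin n) (Fin n) ℝ)
    (hD : (Δ * Δᵀ - D₀ * D₀ᵀ).PosSemidef)
    (hW : (fromRows X₀ U₀).rank = n + m) :
    let W₀ : Matrix (Fin n ⊕ Fin m) (Fin T) ℝ := fromRows X₀ U₀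
    let X₁ : Matrix (Fin n) (Fin T) ℝ := A₀ * X₀ + B₀ * U₀ + D₀
    let AA : Matrix (Fin n ⊕ Fin m) (Fin n ⊕ Fin m) ℝ := W₀ * W₀ᵀ
    let BB : Matrix (Fin n ⊕ Fin m) (Fin n) ℝ := -(W₀ * X₁ᵀ)
    let CC : Matrix (Fin n) (Fin n) ℝ := X₁ * X₁ᵀ - Δ * Δᵀ
    let QQ : Matrix (Fin n) (Fin n) ℝ := BBᵀ * AA⁻¹ * BB - CC
    AA.PosDef ∧ QQ.PosSemidef := by
  intro W₀ X₁ AA BB CC QQ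
  have hAA : AA.PosDef := by
    simpa only [conjTranspose_eq_transpose_of_trivial] using
      posDef_self_mul_conjTranspose_of_rank_eq_card (W := W₀) (by simpa using hW)
  have hX₁ : X₁ = D₀ + fromCols A₀ B₀ * W₀ := by
    rw [fromCols_mul_fromRows, add_comm]
  have hQQ : QQ = (Δ * Δᵀ - D₀ * D₀ᵀ) + D₀ * W₀ᵀ * AA⁻¹ * (D₀ * W₀ᵀ)ᴴ :=
    calc QQ = Δ * Δᵀ - residualGram W₀ X₁ := by
          simp only [QQ, BB, CC, residualGram, transpose_neg, transpose_mul, transpose_transpose,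
            Matrix.neg_mul, Matrix.mul_neg, neg_neg]
          abel
      _ = Δ * Δᵀ - residualGram W₀ D₀ := by
          rw [hX₁, residualGram_add_mul ((isUnit_iff_isUnit_det _).mp hAA.isUnit)]
      _ = (Δ * Δᵀ - D₀ * D₀ᵀ) + D₀ * W₀ᵀ * AA⁻¹ * (D₀ * W₀ᵀ)ᴴ := by
          simp only [residualGram, conjTranspose_eq_transpose_of_trivial, transpose_mul,
            transpose_transpose]
          abel
  exact ⟨hAA, hQQ ▸ hD.add (hAA.posSemidef.inv.mul_mul_conjTranspose_same _)⟩
end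

section
/- Let 𝐀 ∈ ℝ^{N×N} be symmetric positive definite, Z_c ∈ ℝ^{N×n}, and 𝐐 ∈ ℝ^{n×n} symmetric positive semidefinite. Then {Z ∈ ℝ^{N×n} : (Z − Z_c)ᵀ 𝐀 (Z − Z_c) ⪯ 𝐐} = {Z_c + 𝐀^{−1/2} Υ 𝐐^{1/2} : Υ ∈ ℝ^{N×n}, ‖Υ‖ ≤ 1}, where ‖Υ‖ denotes the spectral norm and the square roots are the unique positive semidefinite roots. -/
open Matrix
open scoped Matrix.Norms.L2Operator MatrixOrder

private lemma dp_self_eq_norm_sq {m : ℕ} (v : Fin m → ℝ) :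
    v ⬝ᵥ v = ‖(EuclideanSpace.equiv (Fin m) ℝ).symm v‖ ^ 2 := by
  rw [EuclideanSpace.norm_eq, Real.sq_sqrt (by positivity)]
  simp [dotProduct, sq]

private lemma quad_eq_s11 {N n : ℕ} (Y : Matrix (Fin N) (Fin n) ℝ) (x : Fin n → ℝ) :
    x ⬝ᵥ (Yᵀ * Y) *ᵥ x = (Y *ᵥ x) ⬝ᵥ (Y *ᵥ x) := by
  rw [← mulVec_mulVec, dotProduct_mulVec, vecMul_transpose]

private lemma norm_le_one_iff' {N n : ℕ} (Y : Matrix (Fin N) (Fin n) ℝ) :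
    ‖Y‖ ≤ 1 ↔ (1 - Yᵀ * Y).PosSemidef := by
  constructor
  · intro h
    refine PosSemidef.of_dotProduct_mulVec_nonneg ?_ fun x => ?_
    · have h1 : (Yᵀ * Y).IsHermitian := by
        rw [← conjTranspose_eq_transpose_of_trivial]
        exact isHermitian_conjTranspose_mul_self Y
      exact IsHermitian.sub isHermitian_one h1
    · simp only [sub_mulVec, dotProduct_sub, one_mulVec, star_trivial, quad_eq_s11, sub_nonneg]
      rw [dp_self_eq_norm_sq, dp_self_eq_norm_sq]
      have h1 := Y.l2_opNorm_mulVec ((EuclideanSpace.equiv (Fin n) ℝ).symm x)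
      have h2 : ‖(EuclideanSpace.equiv (Fin N) ℝ).symm (Y *ᵥ x)‖
          ≤ ‖(EuclideanSpace.equiv (Fin n) ℝ).symm x‖ := by
        refine le_trans h1 ?_
        nlinarith [norm_nonneg ((EuclideanSpace.equiv (Fin n) ℝ).symm x)]
      exact pow_le_pow_left₀ (norm_nonneg _) h2 2
  · intro h
    rw [l2_opNorm_def]
    refine ContinuousLinearMap.opNorm_le_bound _ zero_le_one fun x => ?_
    rw [one_mul]
    have h2 := h.dotProduct_mulVec_nonneg (WithLp.equiv 2 (Fin n → ℝ) x)
    simp only [sub_mulVec, dotProduct_sub, one_mulVec, star_trivial, quad_eq_s11, sub_nonneg] at h2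
    set v : Fin n → ℝ := WithLp.equiv 2 (Fin n → ℝ) x with hv
    have key : ‖(EuclideanSpace.equiv (Fin N) ℝ).symm (Y *ᵥ v)‖ ^ 2 ≤ ‖x‖ ^ 2 := by
      rw [← dp_self_eq_norm_sq]
      refine le_trans h2 ?_
      rw [dp_self_eq_norm_sq]
      norm_num
      rfl
    have hle : ‖(EuclideanSpace.equiv (Fin N) ℝ).symm (Y *ᵥ v)‖ ≤ ‖x‖ := by
      nlinarith [norm_nonneg ((EuclideanSpace.equiv (Fin N) ℝ).symm (Y *ᵥ v)), norm_nonneg x]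
    exact le_trans (le_of_eq rfl) hle
open Matrix

private lemma exists_contraction {N n : ℕ} (S : Matrix (Fin n) (Fin n) ℝ)
    (hS : S.PosSemidef) (M : Matrix (Fin N) (Fin n) ℝ)
    (h : (S * S - Mᵀ * M).PosSemidef) :
    ∃ Y : Matrix (Fin N) (Fin n) ℝ, (1 - Yᵀ * Y).PosSemidef ∧ Y * S = M := by
  classical
  set U : Matrix (Fin n) (Fin n) ℝ := (hS.1.eigenvectorUnitary : Matrix (Fin n) (Fin n) ℝ)
    with hUdef
  set lam : Fin n → ℝ := hS.1.eigenvalues with hlamdef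
  have hUU : U * star U = 1 := mem_unitaryGroup_iff.mp (hS.1.eigenvectorUnitary).2
  have hUsU : star U * U = 1 := mem_unitaryGroup_iff'.mp (hS.1.eigenvectorUnitary).2
  have hsp : S = U * diagonal lam * star U := by
    have := hS.1.spectral_theorem
    simpa [RCLike.ofReal_real_eq_id] using this
  set D : Matrix (Fin n) (Fin n) ℝ := diagonal lam with hD
  set P : Matrix (Fin n) (Fin n) ℝ := diagonal (fun i => if lam i = 0 then 0 else 1) with hP
  set Dinv : Matrix (Fin n) (Fin n) ℝ := diagonal (fun i => (lam i)⁻¹) with hDinv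
  set T : Matrix (Fin n) (Fin n) ℝ := U * Dinv * star U with hT
  set Pr : Matrix (Fin n) (Fin n) ℝ := U * P * star U with hPr
  have hsand : ∀ X Y : Matrix (Fin n) (Fin n) ℝ,
      (U * X * star U) * (U * Y * star U) = U * (X * Y) * star U := by
    intro X Y
    simp only [mul_assoc]
    rw [← mul_assoc (star U) U, hUsU, one_mul]
  have hf1 : (fun i => lam i * (lam i)⁻¹) = (fun i => if lam i = 0 then (0:ℝ) else 1) := by
    funext i
    by_cases hi : lam i = 0
    · simp [hi]
    · simp [hi, mul_inv_cancel₀ hi]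
  have hf2 : (fun i => (lam i)⁻¹ * lam i) = (fun i => if lam i = 0 then (0:ℝ) else 1) := by
    funext i
    by_cases hi : lam i = 0
    · simp [hi]
    · simp [hi, inv_mul_cancel₀ hi]
  have hf3 : (fun i => lam i * (if lam i = 0 then (0:ℝ) else 1)) = lam := by
    funext i
    by_cases hi : lam i = 0 <;> simp [hi]
  have hf4 : (fun i => (if lam i = 0 then (0:ℝ) else 1) * (if lam i = 0 then (0:ℝ) else 1))
      = (fun i => if lam i = 0 then (0:ℝ) else 1) := by
    funext i
    by_cases hi : lam i = 0 <;> simp [hi]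
  have hdm : ∀ f g : Fin n → ℝ, (diagonal f * diagonal g : Matrix (Fin n) (Fin n) ℝ)
      = diagonal (fun i => f i * g i) := fun f g => by rw [diagonal_mul_diagonal]
  have hDDinv : D * Dinv = P := by rw [hD, hDinv, hP, hdm, hf1]
  have hDinvD : Dinv * D = P := by rw [hD, hDinv, hP, hdm, hf2]
  have hDP : D * P = D := by rw [hD, hP, hdm, hf3]
  have hPP : P * P = P := by rw [hP, hdm, hf4]
  have hST : S * T = Pr := by rw [hsp, hT, hPr, hsand, hDDinv]
  have hTS : T * S = Pr := by rw [hsp, hT, hPr, hsand, hDinvD]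
  have hSPr : S * Pr = S := by rw [hsp, hPr, hsand, hDP]
  have hPrPr : Pr * Pr = Pr := by rw [hPr, hsand, hPP]
  have hPH : Pᴴ = P := by rw [hP]; simp [diagonal_conjTranspose]
  have hDinvH : Dinvᴴ = Dinv := by rw [hDinv]; simp [diagonal_conjTranspose]
  have hPrH : Prᴴ = Pr := by
    rw [hPr]
    simp only [conjTranspose_mul, ← star_eq_conjTranspose, star_star, hP]
    simp [diagonal_conjTranspose, star_eq_conjTranspose, mul_assoc]
  have hTH : Tᴴ = T := by
    rw [hT]
    simp only [conjTranspose_mul, ← star_eq_conjTranspose, star_star, hDinv]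
    simp [diagonal_conjTranspose, star_eq_conjTranspose, mul_assoc]
  have hSH : Sᴴ = S := hS.1
  have htr : ∀ (A : Matrix (Fin N) (Fin n) ℝ), Aᵀ = Aᴴ :=
    fun A => (conjTranspose_eq_transpose_of_trivial A).symm
  have hQH : (1 - Pr)ᴴ = 1 - Pr := by
    rw [conjTranspose_sub, conjTranspose_one, hPrH]
  -- Step 1: M * Pr = M
  have hMPr : M * Pr = M := by
    set K : Matrix (Fin N) (Fin n) ℝ := M * (1 - Pr) with hK
    have hS0 : S * (1 - Pr) = 0 := by rw [mul_sub, mul_one, hSPr, sub_self]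
    have hS0' : (1 - Pr) * S = 0 := by
      have h1 : ((1 - Pr) * S)ᴴ = 0 := by rw [conjTranspose_mul, hSH, hQH, hS0]
      calc (1 - Pr) * S = (((1 - Pr) * S)ᴴ)ᴴ := by rw [conjTranspose_conjTranspose]
        _ = 0 := by rw [h1]; simp
    have hKH : Kᴴ = (1 - Pr) * Mᴴ := by rw [hK, conjTranspose_mul, hQH]
    have hpsd2 : ((1 - Pr)ᴴ * (S * S - Mᵀ * M) * (1 - Pr)).PosSemidef :=
      h.conjTranspose_mul_mul_same _
    have hcomp : (1 - Pr)ᴴ * (S * S - Mᵀ * M) * (1 - Pr) = -(Kᴴ * K) := by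
      rw [hQH, htr M]
      calc (1 - Pr) * (S * S - Mᴴ * M) * (1 - Pr)
          = ((1 - Pr) * (S * S)) * (1 - Pr) - ((1 - Pr) * (Mᴴ * M)) * (1 - Pr) := by
            rw [mul_sub (1 - Pr) (S * S) (Mᴴ * M),
              sub_mul ((1 - Pr) * (S * S)) ((1 - Pr) * (Mᴴ * M)) (1 - Pr)]
        _ = ((1 - Pr) * S) * (S * (1 - Pr)) - ((1 - Pr) * Mᴴ) * (M * (1 - Pr)) := by
            simp only [Matrix.mul_assoc]
        _ = -(Kᴴ * K) := by rw [hS0', Matrix.zero_mul, hKH, ← hK, zero_sub]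
    rw [hcomp] at hpsd2
    have hpsd1 : (Kᴴ * K).PosSemidef := posSemidef_conjTranspose_mul_self K
    have hKK : Kᴴ * K = 0 := by
      have hzero : ∀ x : Fin n → ℝ, (K *ᵥ x) ⬝ᵥ (K *ᵥ x) = 0 := by
        intro x
        have h1 := hpsd1.dotProduct_mulVec_nonneg x
        have h2 := hpsd2.dotProduct_mulVec_nonneg x
        simp only [star_trivial, neg_mulVec, dotProduct_neg, neg_nonneg] at h1 h2
        have e : x ⬝ᵥ (Kᴴ * K) *ᵥ x = (K *ᵥ x) ⬝ᵥ (K *ᵥ x) := by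
          rw [← htr K, ← mulVec_mulVec, dotProduct_mulVec, vecMul_transpose]
        rw [e] at h1 h2
        linarith
      have hK0 : K = 0 := by
        ext i j
        have hz := hzero (Pi.single j 1)
        rw [dotProduct_self_eq_zero] at hz
        have := congrFun hz i
        simpa [mulVec_single] using this
      rw [hK0]; simp
    have h4 := conjTranspose_mul_self_eq_zero.mp hKK
    rw [hK, Matrix.mul_sub, Matrix.mul_one, sub_eq_zero] at h4
    exact h4.symm
  refine ⟨M * T, ?_, ?_⟩
  · -- 1 - (M*T)ᵀ * (M*T) psd
    have hTt : (M * T)ᵀ = T * Mᵀ := by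
      rw [htr, conjTranspose_mul, hTH, htr M]
    have h1 : T * (S * S) * T = Pr := by
      have e : T * (S * S) * T = (T * S) * (S * T) := by simp only [Matrix.mul_assoc]
      rw [e, hTS, hST, hPrPr]
    have h2 : T * (Mᵀ * M) * T = T * Mᵀ * (M * T) := by simp only [Matrix.mul_assoc]
    have expand : T * (S * S - Mᵀ * M) * T = Pr - T * Mᵀ * (M * T) := by
      rw [mul_sub T (S * S) (Mᵀ * M), sub_mul (T * (S * S)) (T * (Mᵀ * M)) T, h1, h2]
    have e1 : (1 : Matrix (Fin n) (Fin n) ℝ) - (M * T)ᵀ * (M * T)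
        = (1 - Pr) + (T * (S * S - Mᵀ * M) * T) := by
      rw [hTt, expand]
      abel
    rw [e1]
    have hpsdT : (T * (S * S - Mᵀ * M) * T).PosSemidef := by
      have := h.conjTranspose_mul_mul_same T
      rwa [hTH] at this
    refine PosSemidef.add ?_ hpsdT
    have e2 : (1 : Matrix (Fin n) (Fin n) ℝ) - Pr = U * (1 - P) * star U := by
      rw [mul_sub, sub_mul, mul_one, hUU, hPr]
    rw [e2]
    refine PosSemidef.mul_mul_conjTranspose_same ?_ U
    have e3 : (1 : Matrix (Fin n) (Fin n) ℝ) - P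
        = diagonal (fun i => 1 - (if lam i = 0 then 0 else 1)) := by
      rw [hP, ← diagonal_one, diagonal_sub]
    rw [e3]
    refine posSemidef_diagonal_iff.mpr fun i => ?_
    by_cases hi : lam i = 0 <;> simp [hi]
  · rw [Matrix.mul_assoc, hTS, hMPr]

private lemma forward_dir {N n : ℕ} (AA B : Matrix (Fin N) (Fin N) ℝ)
    (S QQ : Matrix (Fin n) (Fin n) ℝ) (Zc Z : Matrix (Fin N) (Fin n) ℝ)
    (hBB : B * B = AA) (hBsym : Bᵀ = B) (hBiB : B⁻¹ * B = 1)
    (hS : S.PosSemidef) (hSS : S * S = QQ)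
    (hZ : (QQ - (Z - Zc)ᵀ * AA * (Z - Zc)).PosSemidef) :
    ∃ Y : Matrix (Fin N) (Fin n) ℝ, ‖Y‖ ≤ 1 ∧ Z = Zc + B⁻¹ * Y * S := by
  have hMM : (B * (Z - Zc))ᵀ * (B * (Z - Zc)) = (Z - Zc)ᵀ * AA * (Z - Zc) := by
    rw [transpose_mul, hBsym, Matrix.mul_assoc, ← Matrix.mul_assoc B, hBB,
      ← Matrix.mul_assoc]
  have key : (S * S - (B * (Z - Zc))ᵀ * (B * (Z - Zc))).PosSemidef := by
    rw [hMM, hSS]; exact hZ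
  obtain ⟨Y, hY, hYS⟩ := exists_contraction S hS (B * (Z - Zc)) key
  refine ⟨Y, (norm_le_one_iff' Y).mpr hY, ?_⟩
  rw [Matrix.mul_assoc, hYS, ← Matrix.mul_assoc, hBiB, Matrix.one_mul,
    add_sub_cancel]

private lemma backward_dir {N n : ℕ} (AA B : Matrix (Fin N) (Fin N) ℝ)
    (S QQ : Matrix (Fin n) (Fin n) ℝ) (Zc Y : Matrix (Fin N) (Fin n) ℝ)
    (hBB : B * B = AA) (hBit : (B⁻¹)ᵀ = B⁻¹) (hBiB : B⁻¹ * B = 1)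
    (hBBi : B * B⁻¹ = 1) (hSH : Sᴴ = S) (hSsym : Sᵀ = S) (hSS : S * S = QQ)
    (hY : ‖Y‖ ≤ 1) :
    (QQ - (Zc + B⁻¹ * Y * S - Zc)ᵀ * AA * (Zc + B⁻¹ * Y * S - Zc)).PosSemidef := by
  have hZZ : Zc + B⁻¹ * Y * S - Zc = B⁻¹ * Y * S := add_sub_cancel_left _ _
  rw [hZZ]
  have hq : (B⁻¹ * Y * S)ᵀ * AA * (B⁻¹ * Y * S) = S * (Yᵀ * Y) * S := by
    rw [transpose_mul, transpose_mul, hBit, hSsym]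
    calc S * (Yᵀ * B⁻¹) * AA * (B⁻¹ * Y * S)
        = S * (Yᵀ * (B⁻¹ * AA * B⁻¹) * Y) * S := by
          simp only [Matrix.mul_assoc]
      _ = S * (Yᵀ * Y) * S := by
          rw [← hBB, ← Matrix.mul_assoc B⁻¹ B B, hBiB, Matrix.one_mul, hBBi,
            Matrix.mul_one]
  rw [hq]
  have hcontr : (1 - Yᵀ * Y).PosSemidef := (norm_le_one_iff' Y).mp hY
  have e : QQ - S * (Yᵀ * Y) * S = Sᴴ * (1 - Yᵀ * Y) * S := by
    rw [hSH, Matrix.mul_sub S 1 (Yᵀ * Y), Matrix.sub_mul, Matrix.mul_one, hSS]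
  rw [e]
  exact hcontr.conjTranspose_mul_mul_same S

/-- Proposition 1: the matrix ellipsoid equals the image of the unit
spectral-norm ball under `Υ ↦ Z_c + 𝐀^{−1/2} Υ 𝐐^{1/2}`. -/
theorem matrix_ellipsoid_parametrization {N n : ℕ}
    (AA : Matrix (Fin N) (Fin N) ℝ) (hA : AA.PosDef)
    (Zc : Matrix (Fin N) (Fin n) ℝ)
    (QQ : Matrix (Fin n) (Fin n) ℝ) (hQ : QQ.PosSemidef) :
    {Z : Matrix (Fin N) (Fin n) ℝ |
        (QQ - (Z - Zc)ᵀ * AA * (Z - Zc)).PosSemidef} =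
      {Z : Matrix (Fin N) (Fin n) ℝ |
        ∃ Y : Matrix (Fin N) (Fin n) ℝ, ‖Y‖ ≤ 1 ∧
          Z = Zc + (CFC.sqrt AA)⁻¹ * Y * CFC.sqrt QQ} := by
  have hB : (CFC.sqrt AA).PosSemidef := Matrix.nonneg_iff_posSemidef.mp (CFC.sqrt_nonneg AA)
  have hBB : CFC.sqrt AA * CFC.sqrt AA = AA := CFC.sqrt_mul_sqrt_self AA hA.posSemidef.nonneg
  have hBsym : (CFC.sqrt AA)ᵀ = CFC.sqrt AA := by
    rw [← conjTranspose_eq_transpose_of_trivial]; exact hB.1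
  have hdet : IsUnit (CFC.sqrt AA).det := by
    have h1 : (CFC.sqrt AA).det * (CFC.sqrt AA).det = AA.det := by
      rw [← det_mul, hBB]
    have h2 := hA.det_pos
    refine isUnit_iff_ne_zero.mpr fun h0 => ?_
    rw [h0, mul_zero] at h1
    rw [← h1] at h2
    exact lt_irrefl _ h2
  have hBiB : (CFC.sqrt AA)⁻¹ * CFC.sqrt AA = 1 := nonsing_inv_mul _ hdet
  have hBBi : CFC.sqrt AA * (CFC.sqrt AA)⁻¹ = 1 := mul_nonsing_inv _ hdet
  have hBit : ((CFC.sqrt AA)⁻¹)ᵀ = (CFC.sqrt AA)⁻¹ := by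
    rw [transpose_nonsing_inv, hBsym]
  have hS : (CFC.sqrt QQ).PosSemidef := Matrix.nonneg_iff_posSemidef.mp (CFC.sqrt_nonneg QQ)
  have hSS : CFC.sqrt QQ * CFC.sqrt QQ = QQ := CFC.sqrt_mul_sqrt_self QQ hQ.nonneg
  have hSH : (CFC.sqrt QQ)ᴴ = CFC.sqrt QQ := hS.1
  have hSsym : (CFC.sqrt QQ)ᵀ = CFC.sqrt QQ := by
    rw [← conjTranspose_eq_transpose_of_trivial]; exact hSH
  ext Z
  simp only [Set.mem_setOf_eq]
  constructor
  · exact fun hZ => forward_dir AA _ _ QQ Zc Z hBB hBsym hBiB hS hSS hZ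
  · rintro ⟨Y, hY, rfl⟩
    exact backward_dir AA _ _ QQ Zc Y hBB hBit hBiB hBBi hSH hSsym hSS hY
end
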